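/- arXiv:2403.19808 — 3 statements merged into one kernel-verified Lean document; each statement's English description precedes it below -/
import Mathlib

section
/- Let H be an Abelian group and γ : X_2 → H a normalized 2-cocycle on a simplicial set X. Then the maps η_n : X_n → N(H)_{n-1} = H^{n-1} defined inductively by η_1(x) = 0, η_2(x) = γ(x), and η_n(x) = (γ(d_3⋯d_n(x)), η_{n-1}(d_1 x) − η_{n-1}(d_0 x)) for n ≥ 3 define a twisting function on X with values in the nerve N(H). -/
open CategoryTheory Simplicial

/-- The face maps of the nerve `N(H)` of an Abelian group `H` (bar construction):
`d_0` drops the first entry, `d_n` drops the last, and `d_i` adds the entries in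
positions `i-1` and `i`. -/
def barδ {H : Type} [AddCommGroup H] {n : ℕ} (i : Fin (n + 2))
    (a : Fin (n + 1) → H) : Fin n → H :=
  fun k =>
    if h1 : (k : ℕ) + 1 < (i : ℕ) then a ⟨k, by omega⟩
    else if h2 : (k : ℕ) + 1 = (i : ℕ) then a ⟨k, by omega⟩ + a ⟨(k : ℕ) + 1, by omega⟩
    else a ⟨(k : ℕ) + 1, by omega⟩

/-- The degeneracy maps of the nerve `N(H)`: `s_j` inserts the identity at position `j`. -/
def barσ {H : Type} [AddCommGroup H] {n : ℕ} (j : Fin (n + 1))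
    (a : Fin n → H) : Fin (n + 1) → H :=
  fun k =>
    if h1 : (k : ℕ) < (j : ℕ) then a ⟨k, by omega⟩
    else if h2 : (k : ℕ) = (j : ℕ) then 0
    else a ⟨(k : ℕ) - 1, by omega⟩

/-- The defining identities of a twisting function on `X` with values in the nerve
`N(H)` of an Abelian group `H` (whose `(n-1)`-simplices are `(n-1)`-tuples in `H`):
`d_0 η(x) = η(d_1 x) − η(d_0 x)`, `d_i η(x) = η(d_{i+1} x)` for `i > 0`,
`η(s_0 x) = 0`, and `η(s_j x) = s_{j-1}(η(x))` for `j > 0`. -/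
def IsBarTwisting (X : SSet.{0}) (H : Type) [AddCommGroup H]
    (η : ∀ n, X _⦋n + 1⦌ → Fin n → H) : Prop :=
  (∀ (n : ℕ) (x : X _⦋n + 2⦌),
      barδ 0 (η (n + 1) x) = η n (X.δ 1 x) - η n (X.δ 0 x)) ∧
  (∀ (n : ℕ) (i : Fin (n + 1)) (x : X _⦋n + 2⦌),
      barδ i.succ (η (n + 1) x) = η n (X.δ i.succ.succ x)) ∧
  (∀ (n : ℕ) (x : X _⦋n⦌), η n (X.σ 0 x) = 0) ∧
  (∀ (n : ℕ) (j : Fin (n + 1)) (x : X _⦋n + 1⦌),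
      η (n + 1) (X.σ j.succ x) = barσ j (η n x))

/-- Iterated top face maps `d_3 ⋯ d_n : X_n → X_2`. -/
def lastFaces (X : SSet.{0}) : ∀ (m : ℕ), X _⦋m + 2⦌ → X _⦋2⦌ := fun m x => match m, x with
  | 0, x => x
  | (m + 1), x => lastFaces X m (X.δ (Fin.last (m + 3)) x)

/-! ### Auxiliary lemmas -/

section Aux

lemma cons_mk_zero {α : Type} {n : ℕ} (c : α) (f : Fin n → α) (h : 0 < n + 1) :
    (Fin.cons c f : Fin (n + 1) → α) ⟨0, h⟩ = c := rfl

lemma cons_mk_succ {α : Type} {n : ℕ} (c : α) (f : Fin n → α) (k : ℕ) (h : k + 1 < n + 1) :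
    (Fin.cons c f : Fin (n + 1) → α) ⟨k + 1, h⟩ = f ⟨k, by omega⟩ :=
  @Fin.cons_succ n (fun _ => α) c f ⟨k, Nat.succ_lt_succ_iff.mp h⟩

variable {H : Type} [AddCommGroup H]

lemma barδ_zero {n : ℕ} (a : Fin (n + 1) → H) (k : Fin n) :
    barδ 0 a k = a ⟨(k : ℕ) + 1, by omega⟩ := by
  simp [barδ]

lemma barδ_one_zero {n : ℕ} (a : Fin (n + 2) → H) (h : 0 < n + 1) :
    barδ (1 : Fin (n + 3)) a ⟨0, h⟩ = a ⟨0, by omega⟩ + a ⟨1, by omega⟩ := by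
  simp [barδ]

lemma barδ_one_succ {n : ℕ} (a : Fin (n + 2) → H) (k : ℕ) (hk : k + 1 < n + 1) :
    barδ (1 : Fin (n + 3)) a ⟨k + 1, hk⟩ = a ⟨k + 1 + 1, by omega⟩ := by
  simp [barδ]

lemma barδ_cons {n : ℕ} (i : Fin (n + 1)) (c : H) (f : Fin (n + 1) → H) :
    barδ i.succ.succ (Fin.cons c f) = Fin.cons c (barδ i.succ f) := by
  funext k
  match k with
  | ⟨0, h⟩ =>
    have h1 : (0 : ℕ) + 1 < ((i.succ.succ : Fin (n + 3)) : ℕ) := by simp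
    simp only [barδ, dif_pos h1, cons_mk_zero]
  | ⟨k + 1, h⟩ =>
    rw [cons_mk_succ]
    simp only [barδ, Fin.val_succ]
    by_cases h1 : k + 1 + 1 < (i : ℕ) + 1 + 1
    · rw [dif_pos h1, dif_pos (by omega : k + 1 < (i : ℕ) + 1), cons_mk_succ]
    · rw [dif_neg h1, dif_neg (by omega : ¬ (k + 1 < (i : ℕ) + 1))]
      by_cases h2 : k + 1 + 1 = (i : ℕ) + 1 + 1
      · rw [dif_pos h2, dif_pos (by omega : k + 1 = (i : ℕ) + 1), cons_mk_succ, cons_mk_succ]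
      · rw [dif_neg h2, dif_neg (by omega : ¬ (k + 1 = (i : ℕ) + 1)), cons_mk_succ]

lemma barδ_sub {n : ℕ} (i : Fin (n + 2)) (f g : Fin (n + 1) → H) :
    barδ i (fun k => f k - g k) = fun k => barδ i f k - barδ i g k := by
  funext k
  simp only [barδ]
  split
  · rfl
  · split
    · abel
    · rfl

lemma barσ_cons {n : ℕ} (j : Fin (n + 1)) (c : H) (f : Fin n → H) :
    barσ j.succ (Fin.cons c f) = Fin.cons c (barσ j f) := by
  funext k
  match k with
  | ⟨0, h⟩ =>
    have h1 : (0 : ℕ) < ((j.succ : Fin (n + 2)) : ℕ) := by simp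
    simp only [barσ, dif_pos h1, cons_mk_zero]
  | ⟨k + 1, h⟩ =>
    rw [cons_mk_succ]
    simp only [barσ, Fin.val_succ]
    by_cases h1 : k + 1 < (j : ℕ) + 1
    · rw [dif_pos h1, dif_pos (by omega : k < (j : ℕ)), cons_mk_succ]
    · rw [dif_neg h1, dif_neg (by omega : ¬ (k < (j : ℕ)))]
      by_cases h2 : k + 1 = (j : ℕ) + 1
      · rw [dif_pos h2, dif_pos (by omega : k = (j : ℕ))]
      · rw [dif_neg h2, dif_neg (by omega : ¬ (k = (j : ℕ)))]
        have h3 : 0 < k := by omega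
        match k, h3 with
        | k + 1, _ => simp only [Nat.add_sub_cancel]; rw [cons_mk_succ]

lemma barσ_sub {n : ℕ} (j : Fin (n + 1)) (f g : Fin n → H) :
    barσ j (fun k => f k - g k) = fun k => barσ j f k - barσ j g k := by
  funext k
  simp only [barσ]
  split
  · rfl
  · split
    · abel
    · rfl

lemma barσ_zero_zero {n : ℕ} (a : Fin (n + 1) → H) (h : 0 < n + 2) :
    barσ (0 : Fin (n + 2)) a ⟨0, h⟩ = 0 := by
  simp [barσ]

lemma barσ_zero_succ {n : ℕ} (a : Fin (n + 1) → H) (k : ℕ) (h : k + 1 < n + 2) :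
    barσ (0 : Fin (n + 2)) a ⟨k + 1, h⟩ = a ⟨k, by omega⟩ := by
  simp [barσ]

end Aux

/-! ### Simplicial identities, element form -/

lemma dd (X : SSet.{0}) {n : ℕ} (a b : ℕ) (hab : a ≤ b) (hb : b < n + 2) (x : X _⦋n + 2⦌) :
    X.δ ⟨a, by omega⟩ (X.δ ⟨b + 1, by omega⟩ x) = X.δ ⟨b, hb⟩ (X.δ ⟨a, by omega⟩ x) := by
  have h := ConcreteCategory.congr_hom (X.δ_comp_δ (i := ⟨a, by omega⟩) (j := ⟨b, hb⟩) hab) x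
  simp only [types_comp_apply, ConcreteCategory.comp_apply] at h
  exact h

lemma ds_le (X : SSet.{0}) {n : ℕ} (a b : ℕ) (hab : a ≤ b) (hb : b < n + 1) (x : X _⦋n + 1⦌) :
    X.δ ⟨a, by omega⟩ (X.σ ⟨b + 1, by omega⟩ x) = X.σ ⟨b, hb⟩ (X.δ ⟨a, by omega⟩ x) := by
  have h := ConcreteCategory.congr_hom (X.δ_comp_σ_of_le (i := ⟨a, by omega⟩) (j := ⟨b, hb⟩)
    (by simpa using hab)) x
  simp only [types_comp_apply, ConcreteCategory.comp_apply] at h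
  exact h

lemma ds_self (X : SSet.{0}) {n : ℕ} (a : ℕ) (ha : a < n + 1) (x : X _⦋n⦌) :
    X.δ ⟨a, by omega⟩ (X.σ ⟨a, ha⟩ x) = x := by
  have h := ConcreteCategory.congr_hom (X.δ_comp_σ_self (i := ⟨a, ha⟩)) x
  simp only [types_comp_apply, types_id_apply, ConcreteCategory.comp_apply, ConcreteCategory.id_apply] at h
  exact h

lemma ds_succ (X : SSet.{0}) {n : ℕ} (a : ℕ) (ha : a < n + 1) (x : X _⦋n⦌) :
    X.δ ⟨a + 1, by omega⟩ (X.σ ⟨a, ha⟩ x) = x := by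
  have h := ConcreteCategory.congr_hom (X.δ_comp_σ_succ (i := ⟨a, ha⟩)) x
  simp only [types_comp_apply, types_id_apply, ConcreteCategory.comp_apply, ConcreteCategory.id_apply] at h
  exact h

lemma ds_gt (X : SSet.{0}) {n : ℕ} (a b : ℕ) (hab : b < a) (ha : a < n + 2) (x : X _⦋n + 1⦌) :
    X.δ ⟨a + 1, by omega⟩ (X.σ ⟨b, by omega⟩ x) = X.σ ⟨b, by omega⟩ (X.δ ⟨a, ha⟩ x) := by
  have h := ConcreteCategory.congr_hom (X.δ_comp_σ_of_gt (i := ⟨a, ha⟩) (j := ⟨b, by omega⟩)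
    (by simpa using hab)) x
  simp only [types_comp_apply, ConcreteCategory.comp_apply] at h
  exact h

/-! ### Lemmas about `lastFaces` -/

lemma lastFaces_succ (X : SSet.{0}) (m : ℕ) (x : X _⦋m + 3⦌) :
    lastFaces X (m + 1) x = lastFaces X m (X.δ ⟨m + 3, by omega⟩ x) := by
  have : (Fin.last (m + 3) : Fin (m + 4)) = ⟨m + 3, by omega⟩ := rfl
  rw [lastFaces.eq_2, this]

lemma lf_absorb (X : SSet.{0}) : ∀ (m : ℕ) (i : ℕ) (hi3 : 3 ≤ i) (hi : i < m + 4)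
    (x : X _⦋m + 3⦌),
    lastFaces X m (X.δ ⟨i, hi⟩ x) = lastFaces X (m + 1) x := fun m i hi3 hi x => match m, i, hi3, hi, x with
  | 0, i, hi3, hi, x => by
    have : i = 3 := by omega
    subst this
    rw [lastFaces_succ]
  | (m + 1), i, hi3, hi, x => by
    rw [lastFaces_succ]
    by_cases hc : i = m + 4
    · subst hc
      rw [lastFaces_succ X (m + 1)]
      rw [lastFaces_succ X m]
    · have hcomm := dd X (n := m + 2) i (m + 3) (by omega) (by omega) x
      have e1 : X.δ (⟨m + 3, by omega⟩ : Fin (m + 4)) (X.δ (⟨i, hi⟩ : Fin (m + 5)) x)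
          = X.δ (⟨i, by omega⟩ : Fin (m + 4)) (X.δ (⟨m + 4, by omega⟩ : Fin (m + 5)) x) := by
        rw [← hcomm]
      rw [e1, lf_absorb X m i hi3 (by omega), ← lastFaces_succ X (m + 1)]

def lastTo3 (X : SSet.{0}) : ∀ (m : ℕ), X _⦋m + 3⦌ → X _⦋3⦌ := fun m x => match m, x with
  | 0, x => x
  | (m + 1), x => lastTo3 X m (X.δ (Fin.last (m + 4)) x)

lemma lastTo3_succ (X : SSet.{0}) (m : ℕ) (x : X _⦋m + 4⦌) :
    lastTo3 X (m + 1) x = lastTo3 X m (X.δ ⟨m + 4, by omega⟩ x) := by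
  have : (Fin.last (m + 4) : Fin (m + 5)) = ⟨m + 4, by omega⟩ := rfl
  rw [lastTo3, this]

lemma lf_eq_d3_lastTo3 (X : SSet.{0}) : ∀ (m : ℕ) (x : X _⦋m + 3⦌),
    lastFaces X (m + 1) x = X.δ (⟨3, by omega⟩ : Fin 4) (lastTo3 X m x) := fun m x => match m, x with
  | 0, x => by rw [lastFaces.eq_2, lastFaces.eq_1, lastTo3.eq_1]; rfl
  | (m + 1), x => by
    rw [lastFaces_succ X (m + 1), lf_eq_d3_lastTo3 X m, lastTo3_succ]

lemma lf_comm_small (X : SSet.{0}) : ∀ (m : ℕ) (i : ℕ) (hi : i < 3) (x : X _⦋m + 3⦌),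
    lastFaces X m (X.δ ⟨i, by omega⟩ x) = X.δ (⟨i, by omega⟩ : Fin 4) (lastTo3 X m x) := fun m i hi x => match m, i, hi, x with
  | 0, i, hi, x => by rw [lastFaces.eq_1, lastTo3.eq_1]
  | (m + 1), i, hi, x => by
    rw [lastFaces_succ X m]
    have hcomm := dd X (n := m + 2) i (m + 3) (by omega) (by omega) x
    have e1 : X.δ (⟨m + 3, by omega⟩ : Fin (m + 4)) (X.δ (⟨i, by omega⟩ : Fin (m + 5)) x)
        = X.δ (⟨i, by omega⟩ : Fin (m + 4)) (X.δ (⟨m + 4, by omega⟩ : Fin (m + 5)) x) := by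
      rw [← hcomm]
    rw [e1, lf_comm_small X m i hi, lastTo3_succ]

lemma lf_sigma_small (X : SSet.{0}) : ∀ (m : ℕ) (j : ℕ) (hj : j < 2) (x : X _⦋m + 2⦌),
    ∃ y : X _⦋1⦌, lastFaces X (m + 1) (X.σ ⟨j, by omega⟩ x) = X.σ ⟨j, by omega⟩ y := fun m j hj x => match m, j, hj, x with
  | 0, j, hj, x => by
    refine ⟨X.δ ⟨2, by omega⟩ x, ?_⟩
    rw [lastFaces_succ X 0, lastFaces.eq_1]
    show X.δ (⟨3, by omega⟩ : Fin 4) (X.σ ⟨j, by omega⟩ x) = _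
    exact ds_gt X (n := 1) 2 j (by omega) (by omega) x
  | (m + 1), j, hj, x => by
    rw [lastFaces_succ X (m + 1)]
    have e1 : X.δ (⟨m + 4, by omega⟩ : Fin (m + 5)) (X.σ (⟨j, by omega⟩ : Fin (m + 4)) x)
        = X.σ ⟨j, by omega⟩ (X.δ (⟨m + 3, by omega⟩ : Fin (m + 4)) x) :=
      ds_gt X (n := m + 2) (m + 3) j (by omega) (by omega) x
    rw [e1]
    exact lf_sigma_small X m j hj _

lemma lf_sigma_big (X : SSet.{0}) : ∀ (m : ℕ) (j : ℕ) (hj2 : 2 ≤ j) (hj : j < m + 3)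
    (x : X _⦋m + 2⦌),
    lastFaces X (m + 1) (X.σ ⟨j, hj⟩ x) = lastFaces X m x := fun m j hj2 hj x => match m, j, hj2, hj, x with
  | 0, j, hj2, hj, x => by
    have : j = 2 := by omega
    subst this
    rw [lastFaces_succ X 0, lastFaces.eq_1]
    show X.δ (⟨3, by omega⟩ : Fin 4) (X.σ ⟨2, by omega⟩ x) = _
    have h := ds_succ X (n := 2) 2 (by omega) x
    rw [h]
    rfl
  | (m + 1), j, hj2, hj, x => by
    rw [lastFaces_succ X (m + 1)]
    by_cases hc : j = m + 3
    · subst hc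
      have h : X.δ (⟨m + 4, by omega⟩ : Fin (m + 5)) (X.σ (⟨m + 3, hj⟩ : Fin (m + 4)) x) = x :=
        ds_succ X (n := m + 3) (m + 3) (by omega) x
      rw [h]
    · have e1 : X.δ (⟨m + 4, by omega⟩ : Fin (m + 5)) (X.σ (⟨j, hj⟩ : Fin (m + 4)) x)
          = X.σ ⟨j, by omega⟩ (X.δ (⟨m + 3, by omega⟩ : Fin (m + 4)) x) :=
        ds_gt X (n := m + 2) (m + 3) j (by omega) (by omega) x
      rw [e1, lf_sigma_big X m j hj2 (by omega), ← lastFaces_succ]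

/-! ### Lemmas about `η` -/

section Eta

variable {X : SSet.{0}} {H : Type} [AddCommGroup H]

lemma eta_eq (γ : X _⦋2⦌ → H) (η : ∀ n, X _⦋n + 1⦌ → Fin n → H)
    (h2 : ∀ x : X _⦋2⦌, η 1 x = fun _ => γ x)
    (hrec : ∀ (n : ℕ) (x : X _⦋n + 3⦌),
      η (n + 2) x = Fin.cons (γ (lastFaces X (n + 1) x))
        (fun k => η (n + 1) (X.δ 1 x) k - η (n + 1) (X.δ 0 x) k)) :
    ∀ (m : ℕ) (x : X _⦋m + 2⦌), η (m + 1) x =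
    Fin.cons (γ (lastFaces X m x)) (fun k => η m (X.δ 1 x) k - η m (X.δ 0 x) k) := fun m x => match m, x with
  | 0, x => by
    funext k
    match k with
    | ⟨0, h⟩ =>
      rw [h2 x, cons_mk_zero]
      rw [lastFaces.eq_1]
  | (m + 1), x => hrec m x

lemma eta_head (γ : X _⦋2⦌ → H) (η : ∀ n, X _⦋n + 1⦌ → Fin n → H)
    (h2 : ∀ x : X _⦋2⦌, η 1 x = fun _ => γ x)
    (hrec : ∀ (n : ℕ) (x : X _⦋n + 3⦌),
      η (n + 2) x = Fin.cons (γ (lastFaces X (n + 1) x))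
        (fun k => η (n + 1) (X.δ 1 x) k - η (n + 1) (X.δ 0 x) k))
    (m : ℕ) (x : X _⦋m + 2⦌) (h : 0 < m + 1) :
    η (m + 1) x ⟨0, h⟩ = γ (lastFaces X m x) := by
  rw [eta_eq γ η h2 hrec m x, cons_mk_zero]

lemma eta_tail (γ : X _⦋2⦌ → H) (η : ∀ n, X _⦋n + 1⦌ → Fin n → H)
    (h2 : ∀ x : X _⦋2⦌, η 1 x = fun _ => γ x)
    (hrec : ∀ (n : ℕ) (x : X _⦋n + 3⦌),
      η (n + 2) x = Fin.cons (γ (lastFaces X (n + 1) x))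
        (fun k => η (n + 1) (X.δ 1 x) k - η (n + 1) (X.δ 0 x) k))
    (m : ℕ) (x : X _⦋m + 2⦌) (k : ℕ) (hk : k + 1 < m + 1) :
    η (m + 1) x ⟨k + 1, hk⟩
      = η m (X.δ 1 x) ⟨k, by omega⟩ - η m (X.δ 0 x) ⟨k, by omega⟩ := by
  rw [eta_eq γ η h2 hrec m x, cons_mk_succ]

end Eta

/-! ### The four twisting identities -/

section Parts

variable {X : SSet.{0}} {H : Type} [AddCommGroup H]

lemma partA (γ : X _⦋2⦌ → H) (η : ∀ n, X _⦋n + 1⦌ → Fin n → H)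
    (h2 : ∀ x : X _⦋2⦌, η 1 x = fun _ => γ x)
    (hrec : ∀ (n : ℕ) (x : X _⦋n + 3⦌),
      η (n + 2) x = Fin.cons (γ (lastFaces X (n + 1) x))
        (fun k => η (n + 1) (X.δ 1 x) k - η (n + 1) (X.δ 0 x) k)) :
    ∀ (n : ℕ) (x : X _⦋n + 2⦌),
      barδ 0 (η (n + 1) x) = η n (X.δ 1 x) - η n (X.δ 0 x) := by
  intro n x
  funext k
  rw [barδ_zero, eta_tail γ η h2 hrec n x k (by omega)]
  simp

lemma partC (γ : X _⦋2⦌ → H) (η : ∀ n, X _⦋n + 1⦌ → Fin n → H)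
    (hnorm : ∀ (x : X _⦋1⦌) (i : Fin 2), γ (X.σ i x) = 0)
    (h2 : ∀ x : X _⦋2⦌, η 1 x = fun _ => γ x)
    (hrec : ∀ (n : ℕ) (x : X _⦋n + 3⦌),
      η (n + 2) x = Fin.cons (γ (lastFaces X (n + 1) x))
        (fun k => η (n + 1) (X.δ 1 x) k - η (n + 1) (X.δ 0 x) k)) :
    ∀ (n : ℕ) (x : X _⦋n⦌), η n (X.σ 0 x) = 0 := by
  intro n
  match n with
  | 0 => intro x; funext k; exact k.elim0
  | 1 =>
    intro x
    funext k
    rw [h2]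
    show γ (X.σ 0 x) = 0
    exact hnorm x 0
  | (m + 2) =>
    intro x
    funext k
    match k with
    | ⟨0, h⟩ =>
      rw [eta_head γ η h2 hrec (m + 1) (X.σ 0 x) h]
      obtain ⟨y, hy⟩ := lf_sigma_small X m 0 (by omega) x
      rw [show (0 : Fin (m + 3)) = ⟨0, by omega⟩ from rfl, hy, hnorm y ⟨0, by omega⟩]
      rfl
    | ⟨k + 1, h⟩ =>
      rw [eta_tail γ η h2 hrec (m + 1) (X.σ 0 x) k h]
      have e1 : X.δ (1 : Fin (m + 4)) (X.σ (0 : Fin (m + 3)) x) = x := by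
        rw [show (1 : Fin (m + 4)) = ⟨1, by omega⟩ from Fin.ext (by simp),
            show (0 : Fin (m + 3)) = ⟨0, by omega⟩ from rfl]
        exact ds_succ X (n := m + 2) 0 (by omega) x
      have e0 : X.δ (0 : Fin (m + 4)) (X.σ (0 : Fin (m + 3)) x) = x := by
        rw [show (0 : Fin (m + 4)) = ⟨0, by omega⟩ from rfl,
            show (0 : Fin (m + 3)) = ⟨0, by omega⟩ from rfl]
        exact ds_self X (n := m + 2) 0 (by omega) x
      rw [e1, e0]
      simp

lemma partD (γ : X _⦋2⦌ → H) (η : ∀ n, X _⦋n + 1⦌ → Fin n → H)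
    (hnorm : ∀ (x : X _⦋1⦌) (i : Fin 2), γ (X.σ i x) = 0)
    (h2 : ∀ x : X _⦋2⦌, η 1 x = fun _ => γ x)
    (hrec : ∀ (n : ℕ) (x : X _⦋n + 3⦌),
      η (n + 2) x = Fin.cons (γ (lastFaces X (n + 1) x))
        (fun k => η (n + 1) (X.δ 1 x) k - η (n + 1) (X.δ 0 x) k)) :
    ∀ (n : ℕ) (j : Fin (n + 1)) (x : X _⦋n + 1⦌),
      η (n + 1) (X.σ j.succ x) = barσ j (η n x) := by
  intro n
  induction n with
  | zero =>
    intro j x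
    have hj : j = 0 := Fin.fin_one_eq_zero j
    subst hj
    funext k
    match k with
    | ⟨0, h⟩ =>
      rw [h2]
      show γ (X.σ (Fin.succ 0) x) = barσ 0 (η 0 x) ⟨0, h⟩
      rw [show (Fin.succ (0 : Fin 1) : Fin 2) = 1 from rfl, hnorm x 1]
      simp [barσ]
  | succ m ih =>
    intro j x
    cases j using Fin.cases with
    | zero =>
      funext k
      match k with
      | ⟨0, h⟩ =>
        rw [eta_head γ η h2 hrec (m + 1) _ h]
        obtain ⟨y, hy⟩ := lf_sigma_small X m 1 (by omega) x
        rw [show (Fin.succ (0 : Fin (m + 2)) : Fin (m + 3)) = ⟨1, by omega⟩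
              from Fin.ext (by simp), hy, hnorm y ⟨1, by omega⟩, barσ_zero_zero]
      | ⟨k + 1, h⟩ =>
        rw [eta_tail γ η h2 hrec (m + 1) _ k h]
        have e1 : X.δ (1 : Fin (m + 4)) (X.σ (Fin.succ (0 : Fin (m + 2))) x) = x := by
          rw [show (1 : Fin (m + 4)) = ⟨1, by omega⟩ from Fin.ext (by simp),
              show (Fin.succ (0 : Fin (m + 2)) : Fin (m + 3)) = ⟨1, by omega⟩
                from Fin.ext (by simp)]
          exact ds_self X (n := m + 2) 1 (by omega) x
        have e0 : X.δ (0 : Fin (m + 4)) (X.σ (Fin.succ (0 : Fin (m + 2))) x)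
            = X.σ (0 : Fin (m + 2)) (X.δ (0 : Fin (m + 3)) x) := by
          rw [show (0 : Fin (m + 4)) = ⟨0, by omega⟩ from rfl,
              show (Fin.succ (0 : Fin (m + 2)) : Fin (m + 3)) = ⟨1, by omega⟩
                from Fin.ext (by simp),
              show (0 : Fin (m + 2)) = ⟨0, by omega⟩ from rfl,
              show (0 : Fin (m + 3)) = ⟨0, by omega⟩ from rfl]
          exact ds_le X (n := m + 1) 0 0 (by omega) (by omega) x
        rw [e1, e0, partC γ η hnorm h2 hrec (m + 1) (X.δ 0 x), barσ_zero_succ]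
        simp
    | succ i =>
      rw [eta_eq γ η h2 hrec (m + 1) (X.σ i.succ.succ x), eta_eq γ η h2 hrec m x, barσ_cons,
        Fin.cons_inj]
      refine ⟨?_, ?_⟩
      · have e : lastFaces X (m + 1) (X.σ i.succ.succ x) = lastFaces X m x := by
          rw [show (i.succ.succ : Fin (m + 3)) = ⟨(i : ℕ) + 2, by omega⟩ from rfl]
          exact lf_sigma_big X m ((i : ℕ) + 2) (by omega) (by omega) x
        rw [e]
      · have e1 : X.δ (1 : Fin (m + 4)) (X.σ (i.succ.succ : Fin (m + 3)) x)
            = X.σ i.succ (X.δ (1 : Fin (m + 3)) x) := by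
          rw [show (1 : Fin (m + 4)) = ⟨1, by omega⟩ from Fin.ext (by simp),
              show (i.succ.succ : Fin (m + 3)) = ⟨(i : ℕ) + 1 + 1, by omega⟩ from rfl,
              show (i.succ : Fin (m + 2)) = ⟨(i : ℕ) + 1, by omega⟩ from rfl,
              show (1 : Fin (m + 3)) = ⟨1, by omega⟩ from Fin.ext (by simp)]
          exact ds_le X (n := m + 1) 1 ((i : ℕ) + 1) (by omega) (by omega) x
        have e0 : X.δ (0 : Fin (m + 4)) (X.σ (i.succ.succ : Fin (m + 3)) x)
            = X.σ i.succ (X.δ (0 : Fin (m + 3)) x) := by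
          rw [show (0 : Fin (m + 4)) = ⟨0, by omega⟩ from rfl,
              show (i.succ.succ : Fin (m + 3)) = ⟨(i : ℕ) + 1 + 1, by omega⟩ from rfl,
              show (i.succ : Fin (m + 2)) = ⟨(i : ℕ) + 1, by omega⟩ from rfl,
              show (0 : Fin (m + 3)) = ⟨0, by omega⟩ from rfl]
          exact ds_le X (n := m + 1) 0 ((i : ℕ) + 1) (by omega) (by omega) x
        rw [e1, e0, ih i (X.δ 1 x), ih i (X.δ 0 x), barσ_sub]

end Parts

section PartB

variable {X : SSet.{0}} {H : Type} [AddCommGroup H]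

lemma partB (γ : X _⦋2⦌ → H) (η : ∀ n, X _⦋n + 1⦌ → Fin n → H)
    (hcocycle : ∀ σ : X _⦋3⦌,
      γ (X.δ 0 σ) - γ (X.δ 1 σ) + γ (X.δ 2 σ) - γ (X.δ 3 σ) = 0)
    (h2 : ∀ x : X _⦋2⦌, η 1 x = fun _ => γ x)
    (hrec : ∀ (n : ℕ) (x : X _⦋n + 3⦌),
      η (n + 2) x = Fin.cons (γ (lastFaces X (n + 1) x))
        (fun k => η (n + 1) (X.δ 1 x) k - η (n + 1) (X.δ 0 x) k)) :
    ∀ (n : ℕ) (i : Fin (n + 1)) (x : X _⦋n + 2⦌),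
      barδ i.succ (η (n + 1) x) = η n (X.δ i.succ.succ x) := by
  intro n
  induction n with
  | zero => intro i x; funext k; exact k.elim0
  | succ m ih =>
    intro i x
    cases i using Fin.cases with
    | zero =>
      funext k
      match k with
      | ⟨0, h⟩ =>
        rw [show (Fin.succ (0 : Fin (m + 2)) : Fin (m + 3)) = (1 : Fin (m + 3))
              from Fin.ext (by simp), barδ_one_zero]
        rw [eta_head γ η h2 hrec (m + 1) x (by omega)]
        have t1 : η (m + 2) x ⟨0 + 1, by omega⟩
            = η (m + 1) (X.δ 1 x) ⟨0, by omega⟩ - η (m + 1) (X.δ 0 x) ⟨0, by omega⟩ :=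
          eta_tail γ η h2 hrec (m + 1) x 0 (by omega)
        rw [show (⟨1, by omega⟩ : Fin (m + 2)) = ⟨0 + 1, by omega⟩ from rfl, t1,
          eta_head γ η h2 hrec m (X.δ 1 x) (by omega),
          eta_head γ η h2 hrec m (X.δ 0 x) (by omega)]
        rw [show (Fin.succ (1 : Fin (m + 3)) : Fin (m + 4)) = ⟨2, by omega⟩
              from Fin.ext (by simp)]
        rw [eta_head γ η h2 hrec m (X.δ ⟨2, by omega⟩ x) h]
        -- now the cocycle condition
        have hc := hcocycle (lastTo3 X m x)
        rw [show (0 : Fin 4) = ⟨0, by omega⟩ from rfl,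
            show (1 : Fin 4) = ⟨1, by omega⟩ from rfl,
            show (2 : Fin 4) = ⟨2, by omega⟩ from rfl,
            show (3 : Fin 4) = ⟨3, by omega⟩ from rfl,
            ← lf_comm_small X m 0 (by omega) x,
            ← lf_comm_small X m 1 (by omega) x,
            ← lf_comm_small X m 2 (by omega) x,
            ← lf_eq_d3_lastTo3 X m x] at hc
        rw [show (1 : Fin (m + 4)) = ⟨1, by omega⟩ from Fin.ext (by simp),
            show (0 : Fin (m + 4)) = ⟨0, by omega⟩ from rfl]
        rw [← sub_eq_zero]
        have key : γ (lastFaces X (m + 1) x)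
              + (γ (lastFaces X m (X.δ ⟨1, by omega⟩ x)) - γ (lastFaces X m (X.δ ⟨0, by omega⟩ x)))
              - γ (lastFaces X m (X.δ ⟨2, by omega⟩ x))
            = -(γ (lastFaces X m (X.δ ⟨0, by omega⟩ x)) - γ (lastFaces X m (X.δ ⟨1, by omega⟩ x))
              + γ (lastFaces X m (X.δ ⟨2, by omega⟩ x)) - γ (lastFaces X (m + 1) x)) := by
          abel
        rw [key, hc, neg_zero]
      | ⟨k + 1, h⟩ =>
        rw [show (Fin.succ (0 : Fin (m + 2)) : Fin (m + 3)) = (1 : Fin (m + 3))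
              from Fin.ext (by simp), barδ_one_succ]
        rw [eta_tail γ η h2 hrec (m + 1) x (k + 1) (by omega)]
        rw [eta_tail γ η h2 hrec m (X.δ 1 x) k (by omega),
            eta_tail γ η h2 hrec m (X.δ 0 x) k (by omega)]
        rw [show (Fin.succ (1 : Fin (m + 3)) : Fin (m + 4)) = ⟨2, by omega⟩
              from Fin.ext (by simp)]
        rw [eta_tail γ η h2 hrec m (X.δ ⟨2, by omega⟩ x) k h]
        rw [show (1 : Fin (m + 4)) = ⟨1, by omega⟩ from Fin.ext (by simp),
            show (0 : Fin (m + 4)) = ⟨0, by omega⟩ from rfl,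
            show (1 : Fin (m + 3)) = ⟨1, by omega⟩ from Fin.ext (by simp),
            show (0 : Fin (m + 3)) = ⟨0, by omega⟩ from rfl]
        have q1 : X.δ (⟨1, by omega⟩ : Fin (m + 3)) (X.δ (⟨2, by omega⟩ : Fin (m + 4)) x)
            = X.δ (⟨1, by omega⟩ : Fin (m + 3)) (X.δ (⟨1, by omega⟩ : Fin (m + 4)) x) :=
          dd X (n := m + 1) 1 1 (by omega) (by omega) x
        have q2 : X.δ (⟨0, by omega⟩ : Fin (m + 3)) (X.δ (⟨2, by omega⟩ : Fin (m + 4)) x)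
            = X.δ (⟨1, by omega⟩ : Fin (m + 3)) (X.δ (⟨0, by omega⟩ : Fin (m + 4)) x) :=
          dd X (n := m + 1) 0 1 (by omega) (by omega) x
        have q3 : X.δ (⟨0, by omega⟩ : Fin (m + 3)) (X.δ (⟨1, by omega⟩ : Fin (m + 4)) x)
            = X.δ (⟨0, by omega⟩ : Fin (m + 3)) (X.δ (⟨0, by omega⟩ : Fin (m + 4)) x) :=
          dd X (n := m + 1) 0 0 (by omega) (by omega) x
        rw [q1, q2, q3]
        abel
    | succ j =>
      rw [eta_eq γ η h2 hrec (m + 1) x, barδ_cons, barδ_sub,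
        ih j (X.δ 1 x), ih j (X.δ 0 x),
        eta_eq γ η h2 hrec m (X.δ j.succ.succ.succ x), Fin.cons_inj]
      refine ⟨?_, ?_⟩
      · rw [show (j.succ.succ.succ : Fin (m + 4)) = ⟨(j : ℕ) + 3, by omega⟩ from rfl,
          lf_absorb X m ((j : ℕ) + 3) (by omega) (by omega) x]
      · have e1 : X.δ (1 : Fin (m + 3)) (X.δ (j.succ.succ.succ : Fin (m + 4)) x)
            = X.δ (j.succ.succ : Fin (m + 3)) (X.δ (1 : Fin (m + 4)) x) := by
          rw [show (1 : Fin (m + 3)) = ⟨1, by omega⟩ from Fin.ext (by simp),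
              show (1 : Fin (m + 4)) = ⟨1, by omega⟩ from Fin.ext (by simp),
              show (j.succ.succ.succ : Fin (m + 4)) = ⟨(j : ℕ) + 2 + 1, by omega⟩ from rfl,
              show (j.succ.succ : Fin (m + 3)) = ⟨(j : ℕ) + 2, by omega⟩ from rfl]
          exact dd X (n := m + 1) 1 ((j : ℕ) + 2) (by omega) (by omega) x
        have e0 : X.δ (0 : Fin (m + 3)) (X.δ (j.succ.succ.succ : Fin (m + 4)) x)
            = X.δ (j.succ.succ : Fin (m + 3)) (X.δ (0 : Fin (m + 4)) x) := by
          rw [show (0 : Fin (m + 3)) = ⟨0, by omega⟩ from rfl,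
              show (0 : Fin (m + 4)) = ⟨0, by omega⟩ from rfl,
              show (j.succ.succ.succ : Fin (m + 4)) = ⟨(j : ℕ) + 2 + 1, by omega⟩ from rfl,
              show (j.succ.succ : Fin (m + 3)) = ⟨(j : ℕ) + 2, by omega⟩ from rfl]
          exact dd X (n := m + 1) 0 ((j : ℕ) + 2) (by omega) (by omega) x
        rw [e1, e0]

end PartB

/-- Let `H` be an Abelian group and `γ : X_2 → H` a normalized
2-cocycle on a simplicial set `X`. Then the maps `η_n : X_n → N(H)_{n-1} = H^{n-1}`
defined inductively by `η_1(x) = 0`, `η_2(x) = γ(x)` and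
`η_n(x) = (γ(d_3⋯d_n(x)), η_{n-1}(d_1 x) − η_{n-1}(d_0 x))` for `n ≥ 3` define a
twisting function on `X` with values in the nerve `N(H)`. -/
theorem cocycle_gives_twisting (X : SSet.{0}) (H : Type) [AddCommGroup H]
    (γ : X _⦋2⦌ → H)
    -- γ is a 2-cocycle
    (hcocycle : ∀ σ : X _⦋3⦌,
      γ (X.δ 0 σ) - γ (X.δ 1 σ) + γ (X.δ 2 σ) - γ (X.δ 3 σ) = 0)
    -- γ is normalized
    (hnorm : ∀ (x : X _⦋1⦌) (i : Fin 2), γ (X.σ i x) = 0)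
    (η : ∀ n, X _⦋n + 1⦌ → Fin n → H)
    -- η is defined from γ by the inductive formulas
    (h2 : ∀ x : X _⦋2⦌, η 1 x = fun _ => γ x)
    (hrec : ∀ (n : ℕ) (x : X _⦋n + 3⦌),
      η (n + 2) x = Fin.cons (γ (lastFaces X (n + 1) x))
        (fun k => η (n + 1) (X.δ 1 x) k - η (n + 1) (X.δ 0 x) k)) :
    IsBarTwisting X H η :=
  ⟨partA γ η h2 hrec, partB γ η hcocycle h2 hrec,
    partC γ η hnorm h2 hrec, partD γ η hnorm h2 hrec⟩
end

section
/- Let H be an Abelian group, γ : X_2 → H a normalized 2-cocycle on a simplicial set X, and η the associated twisting function. Then the assignment sending a normalized 1-cochain α : X_1 → H with ∂α = γ to the section φ_α of π_η : N(H) ×_η X → X defined on low dimensions by φ_0(x) = 0, φ_1(x) = α(x), φ_2(x) = (α(d_2 x), α(d_1 x) − α(d_2 x)) (and extended uniquely by relative 2-coskeletality) is a bijection between the set of normalized 1-cochains trivializing γ and the set of sections of π_η. -/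
open CategoryTheory Simplicial

/-- A section of the twisted bundle `π_η : N(H) ×_η X → X`, given by a family
`φ_n : X_n → N(H)_n` with `d_0(φ(x)) + η(x) = φ(d_0 x)`, `d_i(φ(x)) = φ(d_i x)` for
`i > 0`, and `s_i(φ(x)) = φ(s_i x)`. -/
structure BarSection (X : SSet.{0}) (H : Type) [AddCommGroup H]
    (η : ∀ n, X _⦋n + 1⦌ → Fin n → H) where
  φ : ∀ n, X _⦋n⦌ → Fin n → H
  d0 : ∀ (n : ℕ) (x : X _⦋n + 1⦌), barδ 0 (φ (n + 1) x) + η n x = φ n (X.δ 0 x)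
  dsucc : ∀ (n : ℕ) (i : Fin (n + 1)) (x : X _⦋n + 1⦌),
    barδ i.succ (φ (n + 1) x) = φ n (X.δ i.succ x)
  deg : ∀ (n : ℕ) (i : Fin (n + 1)) (x : X _⦋n⦌),
    barσ i (φ n x) = φ (n + 1) (X.σ i x)

lemma succAbove_val' {n : ℕ} (i : Fin (n+2)) (j : Fin (n+1)) :
    ((i.succAbove j : Fin (n+2)) : ℕ) = if (j:ℕ) < (i:ℕ) then (j:ℕ) else (j:ℕ)+1 := by
  simp only [Fin.succAbove, Fin.lt_def, Fin.coe_castSucc]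
  split <;> simp

lemma predAbove_val' {n : ℕ} (p : Fin (n+1)) (j : Fin (n+2)) :
    ((p.predAbove j : Fin (n+1)) : ℕ) = if (p:ℕ) < (j:ℕ) then (j:ℕ)-1 else (j:ℕ) := by
  simp only [Fin.predAbove, Fin.lt_def, Fin.coe_castSucc]
  split <;> simp

/-- edge morphism `[1] ⟶ ⦋n⦌`, vertices `a ≤ b` (truncated). -/
def eH (n a b : ℕ) : (⦋1⦌ : SimplexCategory) ⟶ ⦋n⦌ :=
  SimplexCategory.mkHom
    { toFun := fun k => if (k:ℕ) = 0 then ⟨min a n, by omega⟩ else ⟨min (max a b) n, by omega⟩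
      monotone' := by
        intro u v huv
        fin_cases u <;> fin_cases v <;> simp_all [Fin.le_def] <;> omega }

/-- triangle morphism `[2] ⟶ ⦋n⦌`, vertices `a ≤ b ≤ c` (truncated). -/
def tH (n a b c : ℕ) : (⦋2⦌ : SimplexCategory) ⟶ ⦋n⦌ :=
  SimplexCategory.mkHom
    { toFun := fun k =>
        if (k:ℕ) = 0 then ⟨min a n, by omega⟩
        else if (k:ℕ) = 1 then ⟨min (max a b) n, by omega⟩
        else ⟨min (max (max a b) c) n, by omega⟩
      monotone' := by
        intro u v huv
        fin_cases u <;> fin_cases v <;> simp_all [Fin.le_def] <;> omega }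

lemma eH_val (n a b : ℕ) (k : Fin 2) :
    (((eH n a b).toOrderHom k : Fin (n+1)) : ℕ) = if (k:ℕ) = 0 then min a n else min (max a b) n := by
  dsimp [eH]
  show ((if (k:ℕ) = 0 then (⟨min a n, by omega⟩ : Fin (n+1)) else ⟨min (max a b) n, by omega⟩ : Fin (n+1)) : ℕ) = _
  split <;> rfl

lemma tH_val (n a b c : ℕ) (k : Fin 3) :
    (((tH n a b c).toOrderHom k : Fin (n+1)) : ℕ) =
      if (k:ℕ) = 0 then min a n else if (k:ℕ) = 1 then min (max a b) n
      else min (max (max a b) c) n := by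
  dsimp [tH]
  show ((if (k:ℕ) = 0 then (⟨min a n, by omega⟩ : Fin (n+1)) else if (k:ℕ) = 1 then ⟨min (max a b) n, by omega⟩
    else ⟨min (max (max a b) c) n, by omega⟩ : Fin (n+1)) : ℕ) = _
  split_ifs <;> rfl

lemma hom_ext_nat {m n : ℕ} {f g : (⦋m⦌ : SimplexCategory) ⟶ ⦋n⦌}
    (h : ∀ k : Fin (m+1), ((f.toOrderHom k : Fin (n+1)) : ℕ) = ((g.toOrderHom k : Fin (n+1)) : ℕ)) :
    f = g := by
  apply SimplexCategory.Hom.ext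
  apply OrderHom.ext
  funext k
  exact Fin.ext (h k)

/-- the edge of `x` from vertex `a` to vertex `b`. -/
def Ed (X : SSet.{0}) {n : ℕ} (a b : ℕ) (x : X _⦋n⦌) : X _⦋1⦌ := X.map (eH n a b).op x

/-- the triangle of `x` with vertices `a ≤ b ≤ c`. -/
def Tr (X : SSet.{0}) {n : ℕ} (a b c : ℕ) (x : X _⦋n⦌) : X _⦋2⦌ := X.map (tH n a b c).op x

lemma Ed_map (X : SSet.{0}) {m n : ℕ} (a b : ℕ) (f : (⦋m⦌ : SimplexCategory) ⟶ ⦋n⦌)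
    (x : X _⦋n⦌) (hf : eH m a b ≫ f = eH n a b) :
    Ed X a b (X.map f.op x) = Ed X a b x := by
  unfold Ed
  rw [← FunctorToTypes.map_comp_apply, ← op_comp, hf]

lemma finv {n : ℕ} (m : ℕ) [m.AtLeastTwo] [NeZero n] :
    (((OfNat.ofNat m) : Fin (n+1)) : ℕ) = m % (n+1) := by
  simp [OfNat.ofNat, Fin.instOfNat, Fin.ofNat]

section CompLemmas
variable (X : SSet.{0})

lemma Ed_δ {n : ℕ} (i : Fin (n+2)) (a b a' b' : ℕ)
    (hab : a ≤ b) (hb : b ≤ n)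
    (ha' : a' = if a < (i:ℕ) then a else a+1) (hb' : b' = if b < (i:ℕ) then b else b+1)
    (x : X _⦋n+1⦌) : Ed X a b (X.δ i x) = Ed X a' b' x := by
  have hcomp : eH n a b ≫ SimplexCategory.δ i = eH (n+1) a' b' := by
    apply hom_ext_nat
    intro k
    show ((i.succAbove ((eH n a b).toOrderHom k) : Fin (n+2)) : ℕ) = _
    rw [succAbove_val', eH_val, eH_val]
    subst ha' hb'
    have hi := i.isLt
    try simp only [show ((0:Fin 1):ℕ) = 0 from rfl, show ((0:Fin 2):ℕ) = 0 from rfl,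
      show ((1:Fin 2):ℕ) = 1 from rfl, show ((0:Fin 3):ℕ) = 0 from rfl,
      show ((1:Fin 3):ℕ) = 1 from rfl, show ((2:Fin 3):ℕ) = 2 from rfl,
      show ((2:Fin 4):ℕ) = 2 from rfl] at *
    split_ifs <;> first | contradiction | omega
  show Ed X a b (X.map (SimplexCategory.δ i).op x) = _
  unfold Ed
  rw [← FunctorToTypes.map_comp_apply, ← op_comp, hcomp]

lemma Ed_σ {n : ℕ} (i : Fin (n+1)) (a b a' b' : ℕ)
    (hab : a ≤ b) (hb : b ≤ n+1)
    (ha' : a' = if (i:ℕ) < a then a-1 else a) (hb' : b' = if (i:ℕ) < b then b-1 else b)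
    (x : X _⦋n⦌) : Ed X a b (X.σ i x) = Ed X a' b' x := by
  have hcomp : eH (n+1) a b ≫ SimplexCategory.σ i = eH n a' b' := by
    apply hom_ext_nat
    intro k
    show ((i.predAbove ((eH (n+1) a b).toOrderHom k) : Fin (n+1)) : ℕ) = _
    rw [predAbove_val', eH_val, eH_val]
    subst ha' hb'
    have hi := i.isLt
    try simp only [show ((0:Fin 1):ℕ) = 0 from rfl, show ((0:Fin 2):ℕ) = 0 from rfl,
      show ((1:Fin 2):ℕ) = 1 from rfl, show ((0:Fin 3):ℕ) = 0 from rfl,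
      show ((1:Fin 3):ℕ) = 1 from rfl, show ((2:Fin 3):ℕ) = 2 from rfl,
      show ((2:Fin 4):ℕ) = 2 from rfl] at *
    split_ifs <;> first | contradiction | omega
  show Ed X a b (X.map (SimplexCategory.σ i).op x) = _
  unfold Ed
  rw [← FunctorToTypes.map_comp_apply, ← op_comp, hcomp]

lemma Tr_δ {n : ℕ} (i : Fin (n+3)) (a b c a' b' c' : ℕ)
    (hab : a ≤ b) (hbc : b ≤ c) (hc : c ≤ n+1)
    (ha' : a' = if a < (i:ℕ) then a else a+1) (hb' : b' = if b < (i:ℕ) then b else b+1)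
    (hc' : c' = if c < (i:ℕ) then c else c+1)
    (x : X _⦋n+2⦌) : Tr X a b c (X.δ i x) = Tr X a' b' c' x := by
  have hcomp : tH (n+1) a b c ≫ SimplexCategory.δ i = tH (n+2) a' b' c' := by
    apply hom_ext_nat
    intro k
    show ((i.succAbove ((tH (n+1) a b c).toOrderHom k) : Fin (n+3)) : ℕ) = _
    rw [succAbove_val', tH_val, tH_val]
    subst ha' hb' hc'
    have hi := i.isLt
    try simp only [show ((0:Fin 1):ℕ) = 0 from rfl, show ((0:Fin 2):ℕ) = 0 from rfl,
      show ((1:Fin 2):ℕ) = 1 from rfl, show ((0:Fin 3):ℕ) = 0 from rfl,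
      show ((1:Fin 3):ℕ) = 1 from rfl, show ((2:Fin 3):ℕ) = 2 from rfl,
      show ((2:Fin 4):ℕ) = 2 from rfl] at *
    split_ifs <;> first | contradiction | omega
  show Tr X a b c (X.map (SimplexCategory.δ i).op x) = _
  unfold Tr
  rw [← FunctorToTypes.map_comp_apply, ← op_comp, hcomp]

lemma Tr_face {n : ℕ} (i : Fin 3) (a b c a' b' : ℕ) (hab : a ≤ b) (hbc : b ≤ c) (hc : c ≤ n)
    (ha' : a' = if 0 < (i:ℕ) then a else b) (hb' : b' = if 1 < (i:ℕ) then b else c)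
    (x : X _⦋n⦌) : X.δ i (Tr X a b c x) = Ed X a' b' x := by
  have hcomp : SimplexCategory.δ i ≫ tH n a b c = eH n a' b' := by
    apply hom_ext_nat
    intro k
    show (((tH n a b c).toOrderHom (i.succAbove k) : Fin (n+1)) : ℕ) = _
    rw [tH_val, eH_val, succAbove_val']
    subst ha' hb'
    have hk := k.isLt
    have hi := i.isLt
    split_ifs <;> first | contradiction | omega
  show X.map (SimplexCategory.δ i).op (Tr X a b c x) = _
  unfold Tr Ed
  rw [← FunctorToTypes.map_comp_apply, ← op_comp, hcomp]

lemma Tr_degen {n : ℕ} (j : Fin 2) (a b a'' b'' c'' : ℕ) (hab : a ≤ b) (hb : b ≤ n)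
    (h1 : a'' = a) (h2 : b'' = if (j:ℕ) = 0 then a else b) (h3 : c'' = b)
    (x : X _⦋n⦌) : Tr X a'' b'' c'' x = X.σ j (Ed X a b x) := by
  have hcomp : SimplexCategory.σ j ≫ eH n a b = tH n a'' b'' c'' := by
    apply hom_ext_nat
    intro k
    show (((eH n a b).toOrderHom (j.predAbove k) : Fin (n+1)) : ℕ) = _
    rw [eH_val, tH_val, predAbove_val']
    subst h1 h2 h3
    have hk := k.isLt
    have hj := j.isLt
    split_ifs <;> first | contradiction | omega
  show _ = X.map (SimplexCategory.σ j).op (Ed X a b x)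
  unfold Tr Ed
  rw [← FunctorToTypes.map_comp_apply, ← op_comp, hcomp]

lemma Ed_degen {n : ℕ} (j : Fin 1) (a : ℕ) (ha : a ≤ n) (x : X _⦋n⦌) :
    Ed X a a x = X.σ j (X.map (SimplexCategory.const ⦋0⦌ ⦋n⦌ ⟨a, by show a < n + 1; omega⟩).op x) := by
  have hcomp : SimplexCategory.σ j ≫ SimplexCategory.const ⦋0⦌ ⦋n⦌ ⟨a, by show a < n + 1; omega⟩
      = eH n a a := by
    apply hom_ext_nat
    intro k
    show ((⟨a, by show a < n + 1; omega⟩ : Fin (n+1)) : ℕ) = _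
    rw [eH_val]
    show a = _
    split_ifs <;> first | contradiction | omega
  show _ = X.map (SimplexCategory.σ j).op (X.map (SimplexCategory.const ⦋0⦌ ⦋n⦌ ⟨a, by show a < n + 1; omega⟩).op x)
  unfold Ed
  rw [← FunctorToTypes.map_comp_apply, ← op_comp, hcomp]

lemma Ed_id (x : X _⦋1⦌) : Ed X 0 1 x = x := by
  have h : eH 1 0 1 = 𝟙 (⦋1⦌ : SimplexCategory) := by
    apply hom_ext_nat
    intro k
    rw [eH_val]
    have hk := k.isLt
    show _ = (k : ℕ)
    split_ifs <;> first | contradiction | omega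
  unfold Ed
  rw [h, op_id, FunctorToTypes.map_id_apply]

lemma Tr_id (x : X _⦋2⦌) : Tr X 0 1 2 x = x := by
  have h : tH 2 0 1 2 = 𝟙 (⦋2⦌ : SimplexCategory) := by
    apply hom_ext_nat
    intro k
    rw [tH_val]
    have hk := k.isLt
    show _ = (k : ℕ)
    split_ifs <;> first | contradiction | omega
  unfold Tr
  rw [h, op_id, FunctorToTypes.map_id_apply]

lemma δ_three (i : Fin 4) (a' b' c' : ℕ)
    (ha' : a' = if 0 < (i:ℕ) then 0 else 1) (hb' : b' = if 1 < (i:ℕ) then 1 else 2)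
    (hc' : c' = if 2 < (i:ℕ) then 2 else 3)
    (x : X _⦋3⦌) : X.δ i x = Tr X a' b' c' x := by
  have h : SimplexCategory.δ i = tH 3 a' b' c' := by
    apply hom_ext_nat
    intro k
    show ((i.succAbove k : Fin 4) : ℕ) = _
    rw [succAbove_val', tH_val]
    subst ha' hb' hc'
    have hk := k.isLt
    have hi := i.isLt
    split_ifs <;> first | contradiction | omega
  show X.map (SimplexCategory.δ i).op x = _
  unfold Tr
  rw [h]

lemma δ_two (i : Fin 3) (a' b' : ℕ)
    (ha' : a' = if 0 < (i:ℕ) then 0 else 1) (hb' : b' = if 1 < (i:ℕ) then 1 else 2)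
    (x : X _⦋2⦌) : X.δ i x = Ed X a' b' x := by
  have h : SimplexCategory.δ i = eH 2 a' b' := by
    apply hom_ext_nat
    intro k
    show ((i.succAbove k : Fin 3) : ℕ) = _
    rw [succAbove_val', eH_val]
    subst ha' hb'
    have hk := k.isLt
    have hi := i.isLt
    split_ifs <;> first | contradiction | omega
  show X.map (SimplexCategory.δ i).op x = _
  unfold Ed
  rw [h]

end CompLemmas

section BarEval
variable {H : Type} [AddCommGroup H]

lemma barδ_lt {n : ℕ} (i : Fin (n+2)) (a : Fin (n+1) → H) (k : Fin n)
    (h : (k:ℕ)+1 < (i:ℕ)) :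
    barδ i a k = a ⟨k, by have := k.isLt; omega⟩ := by
  unfold barδ; rw [dif_pos h]

lemma barδ_mid {n : ℕ} (i : Fin (n+2)) (a : Fin (n+1) → H) (k : Fin n)
    (h : (k:ℕ)+1 = (i:ℕ)) :
    barδ i a k = a ⟨k, by have := k.isLt; omega⟩ + a ⟨(k:ℕ)+1, by have := k.isLt; omega⟩ := by
  unfold barδ; rw [dif_neg (by omega), dif_pos h]

lemma barδ_gt {n : ℕ} (i : Fin (n+2)) (a : Fin (n+1) → H) (k : Fin n)
    (h : (i:ℕ) < (k:ℕ)+1) :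
    barδ i a k = a ⟨(k:ℕ)+1, by have := k.isLt; omega⟩ := by
  unfold barδ; rw [dif_neg (by omega), dif_neg (by omega)]

lemma barσ_lt {n : ℕ} (j : Fin (n+1)) (a : Fin n → H) (k : Fin (n+1))
    (h : (k:ℕ) < (j:ℕ)) :
    barσ j a k = a ⟨k, by have := j.isLt; omega⟩ := by
  unfold barσ; rw [dif_pos h]

lemma barσ_mid {n : ℕ} (j : Fin (n+1)) (a : Fin n → H) (k : Fin (n+1))
    (h : (k:ℕ) = (j:ℕ)) :
    barσ j a k = 0 := by
  unfold barσ; rw [dif_neg (by omega), dif_pos h]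

lemma barσ_gt {n : ℕ} (j : Fin (n+1)) (a : Fin n → H) (k : Fin (n+1))
    (h : (j:ℕ) < (k:ℕ)) :
    barσ j a k = a ⟨(k:ℕ)-1, by have := k.isLt; omega⟩ := by
  unfold barσ; rw [dif_neg (by omega), dif_neg (by omega)]

end BarEval

lemma BarSection.ext' {X : SSet.{0}} {H : Type} [AddCommGroup H]
    {η : ∀ n, X _⦋n + 1⦌ → Fin n → H} {S T : BarSection X H η}
    (h : S.φ = T.φ) : S = T := by
  cases S; cases T; cases h; rfl

section SecLemmas
variable {X : SSet.{0}} {H : Type} [AddCommGroup H] {η : ∀ n, X _⦋n + 1⦌ → Fin n → H}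

lemma sec_phi2_zero (S : BarSection X H η) (x : X _⦋2⦌) :
    S.φ 2 x 0 = S.φ 1 (X.δ 2 x) 0 := by
  have h := congrFun (S.dsucc 1 ⟨1, by omega⟩ x) ⟨0, by omega⟩
  rw [barδ_lt _ _ _ (by decide)] at h
  exact h

lemma sec_phi2_one (S : BarSection X H η) (x : X _⦋2⦌) :
    S.φ 2 x 1 = S.φ 1 (X.δ 1 x) 0 - S.φ 1 (X.δ 2 x) 0 := by
  have h := congrFun (S.dsucc 1 ⟨0, by omega⟩ x) ⟨0, by omega⟩
  rw [barδ_mid _ _ _ (by decide)] at h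
  have h2 : S.φ 2 x 1 = S.φ 1 (X.δ 1 x) 0 - S.φ 2 x 0 := eq_sub_of_add_eq' h
  rw [h2, sec_phi2_zero S x]

lemma sec_norm (S : BarSection X H η) (v : X _⦋0⦌) :
    S.φ 1 (X.σ 0 v) 0 = 0 := by
  have h := congrFun (S.deg 0 ⟨0, by omega⟩ v) ⟨0, by omega⟩
  rw [barσ_mid _ _ _ (by decide)] at h
  exact h.symm

end SecLemmas

section SecExt
variable {X : SSet.{0}} {H : Type} [AddCommGroup H] {η : ∀ n, X _⦋n + 1⦌ → Fin n → H}

lemma sec_ext (S T : BarSection X H η) (h1 : ∀ x : X _⦋1⦌, S.φ 1 x = T.φ 1 x) : S = T := by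
  apply BarSection.ext'
  funext n
  induction n with
  | zero => funext x k; exact k.elim0
  | succ n IH =>
    cases n with
    | zero => funext x; exact h1 x
    | succ m =>
      funext x k
      rcases k with ⟨kv, hkv⟩
      cases kv with
      | zero =>
        have hS := congrFun (S.dsucc (m+1) (Fin.last (m+1)) x) ⟨0, by omega⟩
        have hT := congrFun (T.dsucc (m+1) (Fin.last (m+1)) x) ⟨0, by omega⟩
        rw [barδ_lt _ _ _ (by show 0+1 < m+1+1; omega)] at hS hT
        rw [show S.φ (m+1) = T.φ (m+1) from IH] at hS
        exact hS.trans hT.symm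
      | succ jv =>
        have hS := congrFun (S.d0 (m+1) x) ⟨jv, by omega⟩
        have hT := congrFun (T.d0 (m+1) x) ⟨jv, by omega⟩
        simp only [Pi.add_apply] at hS hT
        rw [barδ_gt _ _ _ (by show 0 < jv+1; omega)] at hS hT
        rw [show S.φ (m+1) = T.φ (m+1) from IH] at hS
        have hS' := eq_sub_of_add_eq hS
        have hT' := eq_sub_of_add_eq hT
        exact hS'.trans hT'.symm

end SecExt

/-- Let `γ : X_2 → H` be a normalized 2-cocycle with associated twisting
function `η`. Sending a section of `π_η : N(H) ×_η X → X` to its underlying normalized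
1-cochain (its degree-1 component) is a bijection onto the set of normalized 1-cochains
`α : X_1 → H` with `∂α = γ`; the inverse sends such an `α` to the section determined in
low dimensions by `φ_0(x) = 0`, `φ_1(x) = α(x)`,
`φ_2(x) = (α(d_2 x), α(d_1 x) − α(d_2 x))` (and extended uniquely by relative
2-coskeletality). -/
theorem sections_biject_with_trivializing_cochains (X : SSet.{0}) (H : Type)
    [AddCommGroup H] (γ : X _⦋2⦌ → H)
    (hcocycle : ∀ σ : X _⦋3⦌,
      γ (X.δ 0 σ) - γ (X.δ 1 σ) + γ (X.δ 2 σ) - γ (X.δ 3 σ) = 0)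
    (hnorm : ∀ (x : X _⦋1⦌) (i : Fin 2), γ (X.σ i x) = 0)
    (η : ∀ n, X _⦋n + 1⦌ → Fin n → H)
    (hη : IsBarTwisting X H η)
    (hηγ : ∀ x : X _⦋2⦌, η 1 x = fun _ => γ x) :
    -- the 1-cochain underlying a section is normalized and trivializes γ
    (∀ S : BarSection X H η,
      (∀ v : X _⦋0⦌, S.φ 1 (X.σ 0 v) 0 = 0) ∧
      (∀ σ : X _⦋2⦌,
        S.φ 1 (X.δ 0 σ) 0 - S.φ 1 (X.δ 1 σ) 0 + S.φ 1 (X.δ 2 σ) 0 = γ σ)) ∧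
    -- a section is given in degree 2 by the stated formulas (and in degree 0 trivially)
    (∀ (S : BarSection X H η) (x : X _⦋2⦌),
      S.φ 2 x 0 = S.φ 1 (X.δ 2 x) 0 ∧
      S.φ 2 x 1 = S.φ 1 (X.δ 1 x) 0 - S.φ 1 (X.δ 2 x) 0) ∧
    -- the assignment `section ↦ 1-cochain` is injective
    (Function.Injective fun S : BarSection X H η => fun x : X _⦋1⦌ => S.φ 1 x 0) ∧
    -- every normalized 1-cochain trivializing γ arises from a (unique) section,
    -- whose low-dimensional components are given by the stated formulas
    (∀ α : X _⦋1⦌ → H,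
      (∀ v : X _⦋0⦌, α (X.σ 0 v) = 0) →
      (∀ σ : X _⦋2⦌, α (X.δ 0 σ) - α (X.δ 1 σ) + α (X.δ 2 σ) = γ σ) →
      ∃ S : BarSection X H η,
        (∀ x : X _⦋1⦌, S.φ 1 x = fun _ => α x) ∧
        (∀ x : X _⦋2⦌,
          S.φ 2 x = Fin.cons (α (X.δ 2 x)) fun _ => α (X.δ 1 x) - α (X.δ 2 x))) := by
  have htriv : ∀ (S : BarSection X H η) (x : X _⦋2⦌),
      S.φ 1 (X.δ 0 x) 0 - S.φ 1 (X.δ 1 x) 0 + S.φ 1 (X.δ 2 x) 0 = γ x := by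
    intro S x
    have h := congrFun (S.d0 1 x) ⟨0, by omega⟩
    simp only [Pi.add_apply] at h
    rw [barδ_gt _ _ _ (by decide)] at h
    rw [congrFun (hηγ x) ⟨0, by omega⟩] at h
    have h' : S.φ 2 x 1 + γ x = S.φ 1 (X.δ 0 x) 0 := h
    rw [sec_phi2_one S x] at h'
    rw [← h']; abel
  refine ⟨fun S => ⟨sec_norm S, htriv S⟩,
    fun S x => ⟨sec_phi2_zero S x, sec_phi2_one S x⟩, ?_, ?_⟩
  · -- injectivity
    intro S T h
    apply sec_ext
    intro x
    funext k
    have hk : k = ⟨0, by omega⟩ := Fin.ext (by omega)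
    rw [hk]
    exact congrFun h x
  · -- existence
    intro α hα0 hαδ
    have hEdegen : ∀ {n : ℕ} (a : ℕ), a ≤ n → ∀ x : X _⦋n⦌, α (Ed X a a x) = 0 := by
      intro n a ha x
      rw [Ed_degen X 0 a ha x]
      exact hα0 _
    have hTdeg2 : ∀ {n : ℕ} (a b : ℕ) (hab : a ≤ b) (hb : b ≤ n) (x : X _⦋n⦌),
        γ (Tr X a b b x) = 0 := by
      intro n a b hab hb x
      rw [Tr_degen X ⟨1, by omega⟩ a b a b b hab hb rfl
        (by show b = if (1:ℕ) = 0 then a else b; norm_num) rfl x]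
      exact hnorm _ _
    have hTγ : ∀ {n : ℕ} (a b c : ℕ) (hab : a ≤ b) (hbc : b ≤ c) (hc : c ≤ n) (x : X _⦋n⦌),
        γ (Tr X a b c x) = α (Ed X b c x) - α (Ed X a c x) + α (Ed X a b x) := by
      intro n a b c hab hbc hc x
      have h := hαδ (Tr X a b c x)
      rw [Tr_face X 0 a b c b c hab hbc hc (by show b = if 0 < (0:ℕ) then a else b; norm_num)
            (by show c = if 1 < (0:ℕ) then b else c; norm_num) x,
          Tr_face X 1 a b c a c hab hbc hc (by show a = if 0 < (1:ℕ) then a else b; norm_num)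
            (by show c = if 1 < (1:ℕ) then b else c; norm_num) x,
          Tr_face X 2 a b c a b hab hbc hc (by show a = if 0 < (2:ℕ) then a else b; norm_num)
            (by show b = if 1 < (2:ℕ) then b else c; norm_num) x] at h
      exact h.symm
    have hηf : ∀ (n : ℕ) (x : X _⦋n+1⦌) (k : Fin n),
        η n x k = γ (Tr X 0 1 ((k:ℕ)+2) x) - γ (Tr X 0 1 ((k:ℕ)+1) x) := by
      intro n
      induction n with
      | zero => intro x k; exact k.elim0
      | succ n IH =>
        cases n with
        | zero =>
          intro x k
          have e2 : (k:ℕ)+2 = 2 := by have := k.isLt; omega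
          have e1 : (k:ℕ)+1 = 1 := by have := k.isLt; omega
          rw [congrFun (hηγ x) k, e2, e1, Tr_id X x, hTdeg2 0 1 (by omega) (by omega) x,
            sub_zero]
        | succ m =>
          intro x k
          have hlow : ∀ (jv : ℕ) (hj : jv < m+1), η (m+2) x ⟨jv, by omega⟩ =
              γ (Tr X 0 1 (jv+2) x) - γ (Tr X 0 1 (jv+1) x) := by
            intro jv hj
            have h := congrFun (hη.2.1 (m+1) (Fin.last (m+1)) x) ⟨jv, by omega⟩
            rw [barδ_lt _ _ _ (by show jv+1 < m+1+1; omega)] at h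
            have hIH : η (m+1) (X.δ (Fin.last (m+1)).succ.succ x) ⟨jv, by omega⟩ =
                γ (Tr X 0 1 (jv+2) (X.δ (Fin.last (m+1)).succ.succ x)) -
                γ (Tr X 0 1 (jv+1) (X.δ (Fin.last (m+1)).succ.succ x)) := IH _ _
            rw [hIH] at h
            rw [Tr_δ X ((Fin.last (m+1)).succ.succ) 0 1 (jv+2) 0 1 (jv+2)
                  (by omega) (by omega) (by omega)
                  (by show (0:ℕ) = if 0 < m+3 then 0 else 0+1; split <;> omega)
                  (by show (1:ℕ) = if 1 < m+3 then 1 else 1+1; split <;> omega)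
                  (by show jv+2 = if jv+2 < m+3 then jv+2 else jv+2+1; split <;> omega) x,
                Tr_δ X ((Fin.last (m+1)).succ.succ) 0 1 (jv+1) 0 1 (jv+1)
                  (by omega) (by omega) (by omega)
                  (by show (0:ℕ) = if 0 < m+3 then 0 else 0+1; split <;> omega)
                  (by show (1:ℕ) = if 1 < m+3 then 1 else 1+1; split <;> omega)
                  (by show jv+1 = if jv+1 < m+3 then jv+1 else jv+1+1; split <;> omega) x] at h
            exact h
          rcases k with ⟨kv, hkkv⟩
          rcases Nat.lt_or_ge kv (m+1) with hlt | hge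
          · exact hlow kv hlt
          · have hkv : kv = m+1 := by omega
            subst hkv
            have h := congrFun (hη.2.1 (m+1) ⟨m, by omega⟩ x) ⟨m, by omega⟩
            rw [barδ_mid _ _ _ rfl] at h
            have hIH : η (m+1) (X.δ ((⟨m, by omega⟩ : Fin (m+2)).succ.succ) x) ⟨m, by omega⟩ =
                γ (Tr X 0 1 (m+2) (X.δ ((⟨m, by omega⟩ : Fin (m+2)).succ.succ) x)) -
                γ (Tr X 0 1 (m+1) (X.δ ((⟨m, by omega⟩ : Fin (m+2)).succ.succ) x)) := IH _ _
            rw [hIH] at h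
            rw [Tr_δ X ((⟨m, by omega⟩ : Fin (m+2)).succ.succ) 0 1 (m+2) 0 1 (m+3)
                  (by omega) (by omega) (by omega)
                  (by show (0:ℕ) = if 0 < m+2 then 0 else 0+1; split <;> omega)
                  (by show (1:ℕ) = if 1 < m+2 then 1 else 1+1; split <;> omega)
                  (by show m+3 = if m+2 < m+2 then m+2 else m+2+1; split <;> omega) x,
                Tr_δ X ((⟨m, by omega⟩ : Fin (m+2)).succ.succ) 0 1 (m+1) 0 1 (m+1)
                  (by omega) (by omega) (by omega)
                  (by show (0:ℕ) = if 0 < m+2 then 0 else 0+1; split <;> omega)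
                  (by show (1:ℕ) = if 1 < m+2 then 1 else 1+1; split <;> omega)
                  (by show m+1 = if m+1 < m+2 then m+1 else m+1+1; split <;> omega) x] at h
            rw [hlow m (by omega)] at h
            have h2 := eq_sub_of_add_eq' h
            have h3 : η (m+2) x ⟨m+1, hkkv⟩ =
                (γ (Tr X 0 1 (m+3) x) - γ (Tr X 0 1 (m+1) x)) -
                (γ (Tr X 0 1 (m+2) x) - γ (Tr X 0 1 (m+1) x)) := h2
            show η (m+2) x ⟨m+1, hkkv⟩ = γ (Tr X 0 1 (m+3) x) - γ (Tr X 0 1 (m+2) x)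
            rw [h3]; abel
    refine ⟨⟨fun n x k => α (Ed X 0 ((k:ℕ)+1) x) - α (Ed X 0 (k:ℕ) x), ?_, ?_, ?_⟩, ?_, ?_⟩
    · -- d0
      intro n x
      funext k
      simp only [Pi.add_apply]
      rw [barδ_gt _ _ _ (by show (0:ℕ) < (k:ℕ)+1; omega)]
      show (α (Ed X 0 ((k:ℕ)+2) x) - α (Ed X 0 ((k:ℕ)+1) x)) + η n x k =
        α (Ed X 0 ((k:ℕ)+1) (X.δ 0 x)) - α (Ed X 0 (k:ℕ) (X.δ 0 x))
      rw [hηf n x k,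
          Ed_δ X 0 0 ((k:ℕ)+1) 1 ((k:ℕ)+2) (by omega) (by have := k.isLt; omega)
            (by show (1:ℕ) = if 0 < (0:ℕ) then 0 else 0+1; norm_num)
            (by show (k:ℕ)+2 = if (k:ℕ)+1 < (0:ℕ) then (k:ℕ)+1 else (k:ℕ)+1+1; norm_num) x,
          Ed_δ X 0 0 (k:ℕ) 1 ((k:ℕ)+1) (by omega) (by have := k.isLt; omega)
            (by show (1:ℕ) = if 0 < (0:ℕ) then 0 else 0+1; norm_num)
            (by show (k:ℕ)+1 = if (k:ℕ) < (0:ℕ) then (k:ℕ) else (k:ℕ)+1; norm_num) x,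
          hTγ 0 1 ((k:ℕ)+2) (by omega) (by omega) (by have := k.isLt; omega) x,
          hTγ 0 1 ((k:ℕ)+1) (by omega) (by omega) (by have := k.isLt; omega) x]
      abel
    · -- dsucc
      intro n i x
      funext k
      rcases Nat.lt_trichotomy ((k:ℕ)+1) ((i:ℕ)+1) with hlt | heq | hgt
      · rw [barδ_lt _ _ _ (by show (k:ℕ)+1 < (i:ℕ)+1; omega)]
        show α (Ed X 0 ((k:ℕ)+1) x) - α (Ed X 0 (k:ℕ) x) =
          α (Ed X 0 ((k:ℕ)+1) (X.δ i.succ x)) - α (Ed X 0 (k:ℕ) (X.δ i.succ x))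
        rw [Ed_δ X i.succ 0 ((k:ℕ)+1) 0 ((k:ℕ)+1) (by omega) (by have := k.isLt; omega)
              (by show (0:ℕ) = if 0 < (i:ℕ)+1 then 0 else 0+1; split <;> omega)
              (by show (k:ℕ)+1 = if (k:ℕ)+1 < (i:ℕ)+1 then (k:ℕ)+1 else (k:ℕ)+1+1; split <;> omega) x,
            Ed_δ X i.succ 0 (k:ℕ) 0 (k:ℕ) (by omega) (by have := k.isLt; omega)
              (by show (0:ℕ) = if 0 < (i:ℕ)+1 then 0 else 0+1; split <;> omega)
              (by show (k:ℕ) = if (k:ℕ) < (i:ℕ)+1 then (k:ℕ) else (k:ℕ)+1; split <;> omega) x]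
      · rw [barδ_mid _ _ _ (by show (k:ℕ)+1 = (i:ℕ)+1; omega)]
        show (α (Ed X 0 ((k:ℕ)+1) x) - α (Ed X 0 (k:ℕ) x)) +
            (α (Ed X 0 ((k:ℕ)+2) x) - α (Ed X 0 ((k:ℕ)+1) x)) =
          α (Ed X 0 ((k:ℕ)+1) (X.δ i.succ x)) - α (Ed X 0 (k:ℕ) (X.δ i.succ x))
        rw [Ed_δ X i.succ 0 ((k:ℕ)+1) 0 ((k:ℕ)+2) (by omega) (by have := k.isLt; omega)
              (by show (0:ℕ) = if 0 < (i:ℕ)+1 then 0 else 0+1; split <;> omega)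
              (by show (k:ℕ)+2 = if (k:ℕ)+1 < (i:ℕ)+1 then (k:ℕ)+1 else (k:ℕ)+1+1; split <;> omega) x,
            Ed_δ X i.succ 0 (k:ℕ) 0 (k:ℕ) (by omega) (by have := k.isLt; omega)
              (by show (0:ℕ) = if 0 < (i:ℕ)+1 then 0 else 0+1; split <;> omega)
              (by show (k:ℕ) = if (k:ℕ) < (i:ℕ)+1 then (k:ℕ) else (k:ℕ)+1; split <;> omega) x]
        abel
      · rw [barδ_gt _ _ _ (by show (i:ℕ)+1 < (k:ℕ)+1; omega)]
        show α (Ed X 0 ((k:ℕ)+2) x) - α (Ed X 0 ((k:ℕ)+1) x) =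
          α (Ed X 0 ((k:ℕ)+1) (X.δ i.succ x)) - α (Ed X 0 (k:ℕ) (X.δ i.succ x))
        rw [Ed_δ X i.succ 0 ((k:ℕ)+1) 0 ((k:ℕ)+2) (by omega) (by have := k.isLt; omega)
              (by show (0:ℕ) = if 0 < (i:ℕ)+1 then 0 else 0+1; split <;> omega)
              (by show (k:ℕ)+2 = if (k:ℕ)+1 < (i:ℕ)+1 then (k:ℕ)+1 else (k:ℕ)+1+1; split <;> omega) x,
            Ed_δ X i.succ 0 (k:ℕ) 0 ((k:ℕ)+1) (by omega) (by have := k.isLt; omega)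
              (by show (0:ℕ) = if 0 < (i:ℕ)+1 then 0 else 0+1; split <;> omega)
              (by show (k:ℕ)+1 = if (k:ℕ) < (i:ℕ)+1 then (k:ℕ) else (k:ℕ)+1; split <;> omega) x]
    · -- deg
      intro n i x
      funext k
      rcases Nat.lt_trichotomy (k:ℕ) (i:ℕ) with hlt | heq | hgt
      · rw [barσ_lt _ _ _ hlt]
        show α (Ed X 0 ((k:ℕ)+1) x) - α (Ed X 0 (k:ℕ) x) =
          α (Ed X 0 ((k:ℕ)+1) (X.σ i x)) - α (Ed X 0 (k:ℕ) (X.σ i x))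
        rw [Ed_σ X i 0 ((k:ℕ)+1) 0 ((k:ℕ)+1) (by omega) (by have := k.isLt; omega)
              (by show (0:ℕ) = if (i:ℕ) < 0 then 0-1 else 0; split <;> omega)
              (by show (k:ℕ)+1 = if (i:ℕ) < (k:ℕ)+1 then (k:ℕ)+1-1 else (k:ℕ)+1; split <;> omega) x,
            Ed_σ X i 0 (k:ℕ) 0 (k:ℕ) (by omega) (by have := k.isLt; omega)
              (by show (0:ℕ) = if (i:ℕ) < 0 then 0-1 else 0; split <;> omega)
              (by show (k:ℕ) = if (i:ℕ) < (k:ℕ) then (k:ℕ)-1 else (k:ℕ); split <;> omega) x]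
      · rw [barσ_mid _ _ _ heq]
        show (0:H) =
          α (Ed X 0 ((k:ℕ)+1) (X.σ i x)) - α (Ed X 0 (k:ℕ) (X.σ i x))
        rw [Ed_σ X i 0 ((k:ℕ)+1) 0 (k:ℕ) (by omega) (by have := k.isLt; omega)
              (by show (0:ℕ) = if (i:ℕ) < 0 then 0-1 else 0; split <;> omega)
              (by show (k:ℕ) = if (i:ℕ) < (k:ℕ)+1 then (k:ℕ)+1-1 else (k:ℕ)+1; split <;> omega) x,
            Ed_σ X i 0 (k:ℕ) 0 (k:ℕ) (by omega) (by have := k.isLt; omega)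
              (by show (0:ℕ) = if (i:ℕ) < 0 then 0-1 else 0; split <;> omega)
              (by show (k:ℕ) = if (i:ℕ) < (k:ℕ) then (k:ℕ)-1 else (k:ℕ); split <;> omega) x]
        rw [sub_self]
      · rw [barσ_gt _ _ _ hgt]
        show α (Ed X 0 ((k:ℕ)-1+1) x) - α (Ed X 0 ((k:ℕ)-1) x) =
          α (Ed X 0 ((k:ℕ)+1) (X.σ i x)) - α (Ed X 0 (k:ℕ) (X.σ i x))
        rw [show (k:ℕ)-1+1 = (k:ℕ) by omega]
        rw [Ed_σ X i 0 ((k:ℕ)+1) 0 (k:ℕ) (by omega) (by have := k.isLt; omega)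
              (by show (0:ℕ) = if (i:ℕ) < 0 then 0-1 else 0; split <;> omega)
              (by show (k:ℕ) = if (i:ℕ) < (k:ℕ)+1 then (k:ℕ)+1-1 else (k:ℕ)+1; split <;> omega) x,
            Ed_σ X i 0 (k:ℕ) 0 ((k:ℕ)-1) (by omega) (by have := k.isLt; omega)
              (by show (0:ℕ) = if (i:ℕ) < 0 then 0-1 else 0; split <;> omega)
              (by show (k:ℕ)-1 = if (i:ℕ) < (k:ℕ) then (k:ℕ)-1 else (k:ℕ); split <;> omega) x]
    · -- φ 1
      intro x
      funext k
      have e1 : (k:ℕ)+1 = 1 := by have := k.isLt; omega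
      have e0 : (k:ℕ) = 0 := by have := k.isLt; omega
      show α (Ed X 0 ((k:ℕ)+1) x) - α (Ed X 0 (k:ℕ) x) = α x
      rw [e1, e0, Ed_id X x, hEdegen 0 (by omega) x, sub_zero]
    · -- φ 2
      intro x
      funext k
      rcases k with ⟨kv, hkv⟩
      cases kv with
      | zero =>
        have hk0 : (⟨0, hkv⟩ : Fin 2) = 0 := rfl
        rw [hk0, Fin.cons_zero]
        show α (Ed X 0 1 x) - α (Ed X 0 0 x) = α (X.δ 2 x)
        rw [hEdegen 0 (by omega) x, sub_zero,
          δ_two X 2 0 1 (by show (0:ℕ) = if 0 < (2:ℕ) then 0 else 1; norm_num)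
            (by show (1:ℕ) = if 1 < (2:ℕ) then 1 else 2; norm_num) x]
      | succ kv2 =>
        have hz : kv2 = 0 := by omega
        subst hz
        have hk1 : (⟨0+1, hkv⟩ : Fin 2) = Fin.succ (0 : Fin 1) := rfl
        rw [hk1, Fin.cons_succ]
        show α (Ed X 0 2 x) - α (Ed X 0 1 x) = α (X.δ 1 x) - α (X.δ 2 x)
        rw [
          δ_two X 1 0 2 (by show (0:ℕ) = if 0 < (1:ℕ) then 0 else 1; norm_num)
            (by show (2:ℕ) = if 1 < (1:ℕ) then 1 else 2; norm_num) x,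
          δ_two X 2 0 1 (by show (0:ℕ) = if 0 < (2:ℕ) then 0 else 1; norm_num)
            (by show (1:ℕ) = if 1 < (2:ℕ) then 1 else 2; norm_num) x]
end

section
/- Let X be a simplicial set of dimension n (every simplex of dimension > n is degenerate). Then the inclusion of the full subcategory (Δ/X)^{≤n} of the category of simplices of X spanned by simplices of dimension at most n into Δ/X is cofinal: for every simplex σ of X, the comma category (Δ/X)^{≤n} ×_{Δ/X} (Δ/X)_{σ/} is non-empty and connected. -/
open CategoryTheory Simplicial

namespace TruncAux

open SimplexCategory Opposite

variable {n : ℕ} {X : SSet.{0}}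

lemma map_map {a b c : SimplexCategory} (X : SSet.{0}) (f : a ⟶ b) (g : b ⟶ c)
    (u : X.obj (op c)) : X.map f.op (X.map g.op u) = X.map (f ≫ g).op u := by
  rw [op_comp, X.map_comp]; rfl

abbrev P (n : ℕ) (X : SSet.{0}) : X.Elementsᵒᵖ → Prop := fun e => e.unop.1.unop.len ≤ n

abbrev el {m : ℕ} (X : SSet.{0}) (x : X.obj (op ⦋m⦌)) : X.Elements := ⟨op ⦋m⦌, x⟩

abbrev Cx (n : ℕ) (X : SSet.{0}) {m : ℕ} (x : X.obj (op ⦋m⦌)) :=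
  StructuredArrow (op (el X x)) (ObjectProperty.ι (P n X : ObjectProperty X.Elementsᵒᵖ))

def mkObj {m k : ℕ} (x : X.obj (op ⦋m⦌)) (hk : k ≤ n) (y : X.obj (op ⦋k⦌))
    (θ : (⦋m⦌ : SimplexCategory) ⟶ ⦋k⦌) (h : X.map θ.op y = x) : Cx n X x :=
  StructuredArrow.mk (Y := ⟨op (el X y), hk⟩)
    (Quiver.Hom.op (⟨θ.op, h⟩ : el X y ⟶ el X x))

lemma eq_mkObj {m : ℕ} {x : X.obj (op ⦋m⦌)} (A : Cx n X x) :
    A = mkObj (k := A.right.obj.unop.1.unop.len) x A.right.property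
      A.right.obj.unop.2 A.hom.unop.val.unop A.hom.unop.property := rfl

def mkHom {m k k' : ℕ} {x : X.obj (op ⦋m⦌)} {hk : k ≤ n} {hk' : k' ≤ n}
    {y : X.obj (op ⦋k⦌)} {y' : X.obj (op ⦋k'⦌)}
    {θ : (⦋m⦌ : SimplexCategory) ⟶ ⦋k⦌} {θ' : (⦋m⦌ : SimplexCategory) ⟶ ⦋k'⦌}
    {h : X.map θ.op y = x} {h' : X.map θ'.op y' = x}
    (α : (⦋k⦌ : SimplexCategory) ⟶ ⦋k'⦌) (hα : X.map α.op y' = y)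
    (hc : θ ≫ α = θ') :
    mkObj x hk y θ h ⟶ mkObj x hk' y' θ' h' :=
  StructuredArrow.homMk (ObjectProperty.homMk (Quiver.Hom.op (⟨α.op, hα⟩ : el X y' ⟶ el X y)))
    (by
      refine Quiver.Hom.unop_inj (Subtype.ext ?_)
      show α.op ≫ θ.op = θ'.op
      rw [← op_comp, hc])

lemma map_mkObj {m l k : ℕ} (x : X.obj (op ⦋m⦌)) (z : X.obj (op ⦋l⦌))
    (τ : (⦋m⦌ : SimplexCategory) ⟶ ⦋l⦌) (hz : X.map τ.op z = x)
    (hk : k ≤ n) (u : X.obj (op ⦋k⦌)) (ψ : (⦋l⦌ : SimplexCategory) ⟶ ⦋k⦌)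
    (hu : X.map ψ.op u = z) (hcomp : X.map (τ ≫ ψ).op u = x) :
    (StructuredArrow.map (Quiver.Hom.op (⟨τ.op, hz⟩ : el X z ⟶ el X x))).obj
        (mkObj z hk u ψ hu)
      = mkObj x hk u (τ ≫ ψ) hcomp := rfl

theorem aux (n : ℕ) (X : SSet.{0})
    (hX : ∀ (m : ℕ), n < m → ∀ x : X _⦋m⦌,
      ∃ (k : ℕ) (_hk : k < m) (φ : (⦋m⦌ : SimplexCategory) ⟶ ⦋k⦌) (y : X _⦋k⦌),
        X.map φ.op y = x) :
    ∀ (m : ℕ) (x : X.obj (op ⦋m⦌)), IsConnected (Cx n X x) := by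
  intro m
  induction m using Nat.strong_induction_on with
  | _ m IH =>
  intro x
  by_cases hmn : m ≤ n
  · -- low dimension : the identity object connects everything
    have hid : X.map (𝟙 (⦋m⦌ : SimplexCategory)).op x = x := by simp
    haveI : Nonempty (Cx n X x) := ⟨mkObj x hmn x (𝟙 _) hid⟩
    refine zigzag_isConnected fun A B => ?_
    rw [eq_mkObj A, eq_mkObj B]
    refine Relation.ReflTransGen.trans (b := mkObj x hmn x (𝟙 _) hid)
      (Relation.ReflTransGen.single (Or.inr ?_))
      (Relation.ReflTransGen.single (Or.inl ?_))
    · exact ⟨mkHom A.hom.unop.val.unop A.hom.unop.property (Category.id_comp _)⟩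
    · exact ⟨mkHom B.hom.unop.val.unop B.hom.unop.property (Category.id_comp _)⟩
  · push_neg at hmn
    obtain ⟨m', rfl⟩ : ∃ m', m = m' + 1 := ⟨m - 1, by omega⟩
    -- nonemptiness
    haveI : Nonempty (Cx n X x) := by
      obtain ⟨k₀, hk₀, φ₀, y₀, hy₀⟩ := hX (m' + 1) hmn x
      obtain ⟨O⟩ := (IH k₀ hk₀ y₀).is_nonempty
      refine ⟨mkObj (k := O.right.obj.unop.1.unop.len) x O.right.property
        O.right.obj.unop.2 (φ₀ ≫ O.hom.unop.val.unop) ?_⟩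
      have hprop : X.map (O.hom.unop.val.unop).op O.right.obj.unop.2 = y₀ :=
        O.hom.unop.property
      rw [← map_map, hprop]
      exact hy₀
    -- connectivity
    have connect : ∀ (kA : ℕ) (hkA : kA ≤ n) (yA : X.obj (op ⦋kA⦌))
        (θA : (⦋m' + 1⦌ : SimplexCategory) ⟶ ⦋kA⦌) (hA : X.map θA.op yA = x)
        (kB : ℕ) (hkB : kB ≤ n) (yB : X.obj (op ⦋kB⦌))
        (θB : (⦋m' + 1⦌ : SimplexCategory) ⟶ ⦋kB⦌) (hB : X.map θB.op yB = x)
        (i' j' : Fin (m' + 1)) (g : (⦋m'⦌ : SimplexCategory) ⟶ ⦋kA⦌)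
        (g' : (⦋m'⦌ : SimplexCategory) ⟶ ⦋kB⦌)
        (hfa : θA = σ i' ≫ g) (hfb : θB = σ j' ≫ g') (hij : i' ≤ j'),
        Zigzag (mkObj x hkA yA θA hA) (mkObj x hkB yB θB hB) := by
      intro kA hkA yA θA hA kB hkB yB θB hB i' j' g g' hfa hfb hij
      have hzi : X.map (σ i').op (X.map g.op yA) = x := by
        rw [map_map, ← hfa]; exact hA
      have hzj : X.map (σ j').op (X.map g'.op yB) = x := by
        rw [map_map, ← hfb]; exact hB
      have hziδ : X.map (δ i'.castSucc).op x = X.map g.op yA := by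
        rw [← hzi, map_map, δ_comp_σ_self, op_id, X.map_id]; rfl
      have hzjδ : X.map (δ j'.castSucc).op x = X.map g'.op yB := by
        rw [← hzj, map_map, δ_comp_σ_self, op_id, X.map_id]; rfl
      have hPA : X.map (σ i' ≫ g).op yA = x := by rw [← hfa]; exact hA
      have hPB : X.map (σ j' ≫ g').op yB = x := by rw [← hfb]; exact hB
      have s1 : Zigzag (mkObj x hkA yA θA hA) (mkObj x hkA yA (σ i' ≫ g) hPA) :=
        Relation.ReflTransGen.single (Or.inl
          ⟨mkHom (𝟙 _) (by simp) (by rw [Category.comp_id]; exact hfa)⟩)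
      have s5 : Zigzag (mkObj x hkB yB (σ j' ≫ g') hPB) (mkObj x hkB yB θB hB) :=
        Relation.ReflTransGen.single (Or.inr
          ⟨mkHom (𝟙 _) (by simp) (by rw [Category.comp_id]; exact hfb)⟩)
      rcases eq_or_lt_of_le hij with rfl | hlt
      · -- same degeneracy direction
        have hg' : X.map g'.op yB = X.map g.op yA := hzjδ.symm.trans hziδ
        haveI := IH m' (by omega) (X.map g.op yA)
        have s2 : Zigzag (mkObj x hkA yA (σ i' ≫ g) hPA)
            (mkObj x hkB yB (σ i' ≫ g') hPB) := by
          have z := zigzag_obj_of_zigzag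
            (StructuredArrow.map (Quiver.Hom.op
              (⟨(σ i').op, hzi⟩ : el X (X.map g.op yA) ⟶ el X x)))
            (isPreconnected_zigzag (mkObj (X.map g.op yA) hkA yA g rfl)
              (mkObj (X.map g.op yA) hkB yB g' hg'))
          exact z
        exact (s1.trans s2).trans s5
      · -- distinct degeneracy directions
        have h1 : (i' : ℕ) < (j' : ℕ) := hlt
        have h2 : (j' : ℕ) < m' + 1 := j'.isLt
        obtain ⟨m'', rfl⟩ : ∃ m'', m' = m'' + 1 := ⟨m' - 1, by omega⟩
        obtain ⟨i, rfl⟩ : ∃ i : Fin (m'' + 1), i' = i.castSucc :=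
          ⟨i'.castPred (Fin.ne_last_of_lt hlt), (Fin.castSucc_castPred _ _).symm⟩
        obtain ⟨j, rfl⟩ : ∃ j : Fin (m'' + 1), j' = j.succ :=
          ⟨j'.pred (Fin.ne_zero_of_lt hlt), (Fin.succ_pred _ _).symm⟩
        have hij2 : i ≤ j := by rwa [Fin.castSucc_lt_succ_iff] at hlt
        have hC : X.map (σ j).op (X.map (δ i.castSucc).op (X.map g'.op yB))
            = X.map g.op yA := by
          rw [map_map, ← δ_comp_σ_of_le (Fin.castSucc_le_castSucc_iff.mpr hij2),
            ← map_map, hzj]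
          exact hziδ
        have hD : X.map (σ i).op (X.map (δ i.castSucc).op (X.map g'.op yB))
            = X.map g'.op yB := by
          rcases eq_or_lt_of_le hij2 with rfl | hlt2
          · have hJI : X.map g'.op yB = X.map g.op yA := by
              rw [← hzjδ, ← hzi, map_map, ← Fin.succ_castSucc, δ_comp_σ_succ,
                op_id, X.map_id]; rfl
            exact hC.trans hJI.symm
          · have hW : X.map (δ i.castSucc).op (X.map g'.op yB)
                = X.map (δ j.castSucc).op (X.map g.op yA) := by
              rw [← hzjδ, ← hziδ, map_map, map_map, ← Fin.succ_castSucc,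
                δ_comp_δ (Fin.castSucc_le_castSucc_iff.mpr hij2)]
            rw [hW, map_map, ← δ_comp_σ_of_gt (Fin.castSucc_lt_castSucc_iff.mpr hlt2),
              ← map_map, hzi, Fin.succ_castSucc]
            exact hzjδ
        obtain ⟨O⟩ :=
          (IH m'' (by omega) (X.map (δ i.castSucc).op (X.map g'.op yB))).is_nonempty
        have hψ : X.map (O.hom.unop.val.unop).op O.right.obj.unop.2
            = X.map (δ i.castSucc).op (X.map g'.op yB) :=
          O.hom.unop.property
        have hOA : X.map (σ j ≫ O.hom.unop.val.unop).op O.right.obj.unop.2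
            = X.map g.op yA := by rw [← map_map, hψ]; exact hC
        have hOB : X.map (σ i ≫ O.hom.unop.val.unop).op O.right.obj.unop.2
            = X.map g'.op yB := by rw [← map_map, hψ]; exact hD
        have hPO₁ : X.map (σ i.castSucc ≫ σ j ≫ O.hom.unop.val.unop).op
            O.right.obj.unop.2 = x := by rw [← map_map, hOA]; exact hzi
        have hPO₂ : X.map (σ j.succ ≫ σ i ≫ O.hom.unop.val.unop).op
            O.right.obj.unop.2 = x := by rw [← map_map, hOB]; exact hzj
        haveI := IH (m'' + 1) (by omega) (X.map g.op yA)
        haveI := IH (m'' + 1) (by omega) (X.map g'.op yB)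
        have s2 : Zigzag (mkObj x hkA yA (σ i.castSucc ≫ g) hPA)
            (mkObj (k := O.right.obj.unop.1.unop.len) x O.right.property
              O.right.obj.unop.2 (σ i.castSucc ≫ σ j ≫ O.hom.unop.val.unop) hPO₁) := by
          have z := zigzag_obj_of_zigzag
            (StructuredArrow.map (Quiver.Hom.op
              (⟨(σ i.castSucc).op, hzi⟩ : el X (X.map g.op yA) ⟶ el X x)))
            (isPreconnected_zigzag (mkObj (X.map g.op yA) hkA yA g rfl)
              (mkObj (k := O.right.obj.unop.1.unop.len) (X.map g.op yA)
                O.right.property O.right.obj.unop.2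
                (σ j ≫ O.hom.unop.val.unop) hOA))
          exact z
        have s3 : Zigzag
            (mkObj (k := O.right.obj.unop.1.unop.len) x O.right.property
              O.right.obj.unop.2 (σ i.castSucc ≫ σ j ≫ O.hom.unop.val.unop) hPO₁)
            (mkObj (k := O.right.obj.unop.1.unop.len) x O.right.property
              O.right.obj.unop.2 (σ j.succ ≫ σ i ≫ O.hom.unop.val.unop) hPO₂) :=
          Relation.ReflTransGen.single (Or.inl ⟨mkHom (𝟙 _) (by simp) (by
            rw [Category.comp_id, ← Category.assoc, ← Category.assoc, σ_comp_σ hij2])⟩)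
        have s4 : Zigzag
            (mkObj (k := O.right.obj.unop.1.unop.len) x O.right.property
              O.right.obj.unop.2 (σ j.succ ≫ σ i ≫ O.hom.unop.val.unop) hPO₂)
            (mkObj x hkB yB (σ j.succ ≫ g') hPB) := by
          have z := zigzag_obj_of_zigzag
            (StructuredArrow.map (Quiver.Hom.op
              (⟨(σ j.succ).op, hzj⟩ : el X (X.map g'.op yB) ⟶ el X x)))
            (isPreconnected_zigzag
              (mkObj (k := O.right.obj.unop.1.unop.len) (X.map g'.op yB)
                O.right.property O.right.obj.unop.2
                (σ i ≫ O.hom.unop.val.unop) hOB)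
              (mkObj (X.map g'.op yB) hkB yB g' rfl))
          exact z
        exact (((s1.trans s2).trans s3).trans s4).trans s5
    refine zigzag_isConnected fun A B => ?_
    rw [eq_mkObj A, eq_mkObj B]
    have hkA : A.right.obj.unop.1.unop.len ≤ n := A.right.property
    have hkB : B.right.obj.unop.1.unop.len ≤ n := B.right.property
    have hninjA : ¬Function.Injective (SimplexCategory.Hom.toOrderHom
        (A.hom.unop.val.unop :
          (⦋m' + 1⦌ : SimplexCategory) ⟶ ⦋A.right.obj.unop.1.unop.len⦌)) := by
      intro hinj
      have hcard : Fintype.card (Fin (m' + 1 + 1))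
          ≤ Fintype.card (Fin (A.right.obj.unop.1.unop.len + 1)) :=
        Fintype.card_le_of_injective _ hinj
      simp only [Fintype.card_fin] at hcard
      omega
    have hninjB : ¬Function.Injective (SimplexCategory.Hom.toOrderHom
        (B.hom.unop.val.unop :
          (⦋m' + 1⦌ : SimplexCategory) ⟶ ⦋B.right.obj.unop.1.unop.len⦌)) := by
      intro hinj
      have hcard : Fintype.card (Fin (m' + 1 + 1))
          ≤ Fintype.card (Fin (B.right.obj.unop.1.unop.len + 1)) :=
        Fintype.card_le_of_injective _ hinj
      simp only [Fintype.card_fin] at hcard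
      omega
    obtain ⟨iA, g, hfa⟩ := eq_σ_comp_of_not_injective _ hninjA
    obtain ⟨iB, g', hfb⟩ := eq_σ_comp_of_not_injective _ hninjB
    rcases le_total iA iB with hij | hij
    · exact connect _ A.right.property _ _ A.hom.unop.property _ B.right.property _ _
        B.hom.unop.property iA iB g g' hfa hfb hij
    · exact (connect _ B.right.property _ _ B.hom.unop.property _ A.right.property _ _
        A.hom.unop.property iB iA g' g hfb hfa hij).symm

end TruncAux

/-- Let `X` be a simplicial set of dimension `n` (every simplex of
dimension `> n` is degenerate, i.e. is the image of a lower-dimensional simplex under a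
structure map `φ* ` with `φ : ⦋m⦌ → ⦋k⦌`, `k < m`). Then the inclusion of the full
subcategory of the category of simplices of `X` (realized as `X.Elementsᵒᵖ`) spanned by
the simplices of dimension at most `n` is a cofinal (final) functor: for every simplex
`σ` of `X` the relevant comma category is non-empty and connected. -/
theorem truncated_category_of_simplices_final (n : ℕ) (X : SSet.{0})
    (hX : ∀ (m : ℕ), n < m → ∀ x : X _⦋m⦌,
      ∃ (k : ℕ) (_hk : k < m) (φ : (⦋m⦌ : SimplexCategory) ⟶ ⦋k⦌) (y : X _⦋k⦌),
        X.map φ.op y = x) :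
    (ObjectProperty.ι
      (fun e : X.Elementsᵒᵖ => e.unop.1.unop.len ≤ n : ObjectProperty X.Elementsᵒᵖ)).Final := by
  constructor
  intro d
  exact TruncAux.aux n X hX d.unop.1.unop.len d.unop.2
end
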